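/- arXiv:2305.01036 — 2 statements merged into one kernel-verified Lean document; each statement's English description precedes it below -/
import Mathlib

section
/- Suppose ρ is a regular, nonnegative solution of the Patlak–Keller–Segel–IPM system that forms a finite-time singularity at T_* < ∞. Then for every N ≥ N₀: there are only finitely many good intervals and finitely many bad intervals of level N in [0,T_*); the good and bad intervals of level N intertwine (between any two good intervals of level N there is a bad interval of level N, and between any two bad intervals of level N there is a good interval of level N); the first and the last interval of level N are good; and the number of good intervals of level N exceeds the number of bad intervals of level N by exactly one. -/
/-! The squared deviation `t ↦ ‖ρ(t) - ρ_M‖²_{L²}` is continuous on `[0,T)`, and along the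
switching times its values `2 ^ lev k` change by at least one at every step. If the `t_k`
accumulated at some time before `T`, continuity would force these jumps to vanish; hence
`t_k → T`, and the blow-up gives `lev k → ∞`.

What remains is the combinatorics of a walk on `ℕ` with steps `±1` that starts at or below `N`
and tends to infinity. Good and bad intervals of level `N` are its up- and down-crossings of the
edge `N → N + 1`; crossings in opposite directions alternate (discrete intermediate value
theorem), the first and last crossings go up, and their numbers differ by the telescoping sum of
the indicators `[N < lev k]`, which is `1 - 0`. -/

open MeasureTheory Real Set Filter

noncomputable section

/-- The fundamental domain `Ω = 𝕋 × [0,π]`, realized as `(-π,π] × [0,π] ⊆ ℝ²`. -/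
def Qdom : Set (ℝ × ℝ) := Ioc (-π) π ×ˢ Icc 0 π

/-- The closed strip `ℝ × [0,π]` on which the PDE is posed (functions are `2π`-periodic in
the first variable). -/
def Strip : Set (ℝ × ℝ) := univ ×ˢ Icc 0 π

/-- `2π`-periodicity in the first variable. -/
def Periodic2 (f : ℝ × ℝ → ℝ) : Prop := ∀ p : ℝ × ℝ, f (p.1 + 2 * π, p.2) = f p

/-- First partial derivative `∂_{x₁}`. -/
def pd1 (f : ℝ × ℝ → ℝ) (p : ℝ × ℝ) : ℝ := fderiv ℝ f p (1, 0)

/-- Second partial derivative `∂_{x₂}`. -/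
def pd2 (f : ℝ × ℝ → ℝ) (p : ℝ × ℝ) : ℝ := fderiv ℝ f p (0, 1)

/-- Laplacian. -/
def lap2 (f : ℝ × ℝ → ℝ) (p : ℝ × ℝ) : ℝ := pd1 (pd1 f) p + pd2 (pd2 f) p

/-- Mean over `Ω`: `f_M = (1/(2π²)) ∫_Ω f`. -/
def meanQ (f : ℝ × ℝ → ℝ) : ℝ := (1 / (2 * π ^ 2)) * ∫ p in Qdom, f p

/-- Squared `L²(Ω)` norm. -/
def nL2sq (f : ℝ × ℝ → ℝ) : ℝ := ∫ p in Qdom, (f p) ^ 2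

/-- `L²(Ω)` norm. -/
def nL2 (f : ℝ × ℝ → ℝ) : ℝ := Real.sqrt (nL2sq f)

/-- `L¹(Ω)` norm. -/
def nL1 (f : ℝ × ℝ → ℝ) : ℝ := ∫ p in Qdom, |f p|

/-- `L^∞(Ω)` norm (for continuous functions). -/
def nLinf (f : ℝ × ℝ → ℝ) : ℝ := sSup ((fun p => |f p|) '' Qdom)

/-- Squared `L²(Ω)` norm of the gradient. -/
def gradL2sq (f : ℝ × ℝ → ℝ) : ℝ := ∫ p in Qdom, ((pd1 f p) ^ 2 + (pd2 f p) ^ 2)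

/-- `L²(Ω)` norm of the gradient. -/
def gradL2 (f : ℝ × ℝ → ℝ) : ℝ := Real.sqrt (gradL2sq f)

/-- `x₁`-average: `f̄(x₂) = (1/(2π)) ∫_𝕋 f(y₁,x₂) dy₁`. -/
def barF (f : ℝ × ℝ → ℝ) : ℝ × ℝ → ℝ := fun p => (1 / (2 * π)) * ∫ y in Ioc (-π) π, f (y, p.2)

/-- The fluctuation `f̃ = f - f̄`. -/
def tildeF (f : ℝ × ℝ → ℝ) : ℝ × ℝ → ℝ := fun p => f p - barF f p

/-- Dirichlet eigenfunction coefficients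
`f̂_D(k₁,k₂) = (1/π) ∫_𝕋 ∫₀^π f e^{-i k₁ x₁} sin(k₂ x₂) dx₂ dx₁`. -/
def dCoeff (f : ℝ × ℝ → ℝ) (k1 : ℤ) (k2 : ℕ) : ℂ :=
  (π : ℂ)⁻¹ * ∫ p in Qdom,
    (f p : ℂ) * Complex.exp (-Complex.I * (k1 : ℂ) * (p.1 : ℂ)) *
      ((Real.sin ((k2 : ℝ) * p.2) : ℝ) : ℂ)

/-- Squared `Ḣ₀⁻¹(Ω)` norm: `Σ_{k₁∈ℤ, k₂≥1} (k₁²+k₂²)⁻¹ |f̂_D(k₁,k₂)|²`. -/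
def H0neg1sq (f : ℝ × ℝ → ℝ) : ℝ :=
  ∑' k : ℤ × ℕ, (((k.1 : ℝ) ^ 2 + ((k.2 : ℝ) + 1) ^ 2)⁻¹ *
    Complex.normSq (dCoeff f k.1 (k.2 + 1)))

/-- `c = (−Δ_N)⁻¹ f`: the mean-zero, periodic solution of `-Δc = f` on the strip with
Neumann boundary conditions. -/
def IsInvNeumann (c f : ℝ × ℝ → ℝ) : Prop :=
  ContDiff ℝ (⊤ : ℕ∞) c ∧ Periodic2 c ∧ (∀ p ∈ Strip, -(lap2 c p) = f p) ∧
    (∀ x1 : ℝ, pd2 c (x1, 0) = 0 ∧ pd2 c (x1, π) = 0) ∧ meanQ c = 0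

/-- `ψ = (−Δ_D)⁻¹ f`: the periodic solution of `-Δψ = f` on the strip with
Dirichlet boundary conditions. -/
def IsInvDirichlet (ψ f : ℝ × ℝ → ℝ) : Prop :=
  ContDiff ℝ (⊤ : ℕ∞) ψ ∧ Periodic2 ψ ∧ (∀ p ∈ Strip, -(lap2 ψ p) = f p) ∧
    (∀ x1 : ℝ, ψ (x1, 0) = 0 ∧ ψ (x1, π) = 0)

/-- `ρ`, together with the chemical potential `c = (−Δ_N)⁻¹(ρ-ρ_M)` and stream function
`ψ = (−Δ_D)⁻¹ ∂_{x₁} ρ` (so that `u = g ∇^⊥ ψ`), is a regular solution of the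
Patlak–Keller–Segel–IPM system with buoyancy parameter `g` on the time set `I`:
continuous on `Ω × I`, `C^∞` in space-time for positive times, periodic, satisfying the
equation classically with Neumann boundary conditions for `ρ`. -/
structure IsRegSol (g : ℝ) (I : Set ℝ) (ρ c ψ : ℝ → ℝ × ℝ → ℝ) : Prop where
  cont : ContinuousOn (fun q : ℝ × (ℝ × ℝ) => ρ q.1 q.2) (I ×ˢ Strip)
  smooth : ContDiffOn ℝ (⊤ : ℕ∞) (fun q : ℝ × (ℝ × ℝ) => ρ q.1 q.2)
    ((I ∩ Ioi 0) ×ˢ (univ : Set (ℝ × ℝ)))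
  smooth_space : ∀ t ∈ I ∩ Ioi (0 : ℝ), ContDiff ℝ (⊤ : ℕ∞) (ρ t)
  periodic : ∀ t ∈ I, Periodic2 (ρ t)
  chem : ∀ t ∈ I ∩ Ioi (0 : ℝ), IsInvNeumann (c t) (fun p => ρ t p - meanQ (ρ t))
  stream : ∀ t ∈ I ∩ Ioi (0 : ℝ), IsInvDirichlet (ψ t) (fun p => pd1 (ρ t) p)
  bc : ∀ t ∈ I ∩ Ioi (0 : ℝ), ∀ x1 : ℝ, pd2 (ρ t) (x1, 0) = 0 ∧ pd2 (ρ t) (x1, π) = 0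
  pde : ∀ t ∈ I ∩ Ioi (0 : ℝ), ∀ p ∈ Strip,
    deriv (fun s => ρ s p) t
      + (-(g * pd2 (ψ t) p)) * pd1 (ρ t) p + (g * pd1 (ψ t) p) * pd2 (ρ t) p
      - lap2 (ρ t) p
      + (pd1 (fun q => ρ t q * pd1 (c t) q) p + pd2 (fun q => ρ t q * pd2 (c t) q) p) = 0

/-- Nonnegativity of a solution on the time set `I`. -/
def NonnegSol (I : Set ℝ) (ρ : ℝ → ℝ × ℝ → ℝ) : Prop :=
  ∀ t ∈ I, ∀ p ∈ Strip, 0 ≤ ρ t p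

/-- The deviation from the mean: `ρ(·,t) - ρ_M`. -/
def devF (ρ : ℝ → ℝ × ℝ → ℝ) (t : ℝ) : ℝ × ℝ → ℝ := fun p => ρ t p - meanQ (ρ t)

/-- Potential energy `E(t) = ∫_Ω ρ(t,x)(π - x₂) dx`. -/
def potE (ρ : ℝ → ℝ × ℝ → ℝ) (t : ℝ) : ℝ := ∫ p in Qdom, ρ t p * (π - p.2)

/-- `(s,r)` is a good interval of level `N`. -/
def GoodInterval (ρ : ℝ → ℝ × ℝ → ℝ) (N : ℕ) (s r : ℝ) : Prop :=
  s < r ∧ nL2sq (devF ρ s) = 2 ^ N ∧ nL2sq (devF ρ r) = 2 ^ (N + 1) ∧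
    ∀ t ∈ Ioo s r, (2 : ℝ) ^ N / 2 < nL2sq (devF ρ t) ∧ nL2sq (devF ρ t) < 2 ^ (N + 1)

/-- `(s,r)` is a bad interval of level `N`. -/
def BadInterval (ρ : ℝ → ℝ × ℝ → ℝ) (N : ℕ) (s r : ℝ) : Prop :=
  s < r ∧ nL2sq (devF ρ s) = 2 ^ (N + 1) ∧ nL2sq (devF ρ r) = 2 ^ N ∧
    ∀ t ∈ Ioo s r, (2 : ℝ) ^ N < nL2sq (devF ρ t) ∧ nL2sq (devF ρ t) < 2 ^ (N + 2)

/-- Indices `k` such that `(t_k, t_{k+1})` is a good interval of level `N`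
(in terms of the level function `lev`). -/
def GoodIdx (lev : ℕ → ℕ) (N : ℕ) : Set ℕ := {k | 1 ≤ k ∧ lev k = N ∧ lev (k + 1) = N + 1}

/-- Indices `k` such that `(t_k, t_{k+1})` is a bad interval of level `N`. -/
def BadIdx (lev : ℕ → ℕ) (N : ℕ) : Set ℕ := {k | 1 ≤ k ∧ lev k = N + 1 ∧ lev (k + 1) = N}

theorem continuousOn_setIntegral_of_isCompact {X Y : Type*} [TopologicalSpace X]
    [FirstCountableTopology X] [TopologicalSpace Y] [MeasurableSpace Y] [OpensMeasurableSpace Y]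
    [SecondCountableTopology Y] {μ : Measure Y} [IsFiniteMeasureOnCompacts μ]
    {F : X → Y → ℝ} {I : Set X} {K s : Set Y} (hI : IsCompact I) (hK : IsCompact K)
    (hF : ContinuousOn (Function.uncurry F) (I ×ˢ K)) (hs : MeasurableSet s) (hsK : s ⊆ K) :
    ContinuousOn (fun x => ∫ y in s, F x y ∂μ) I := by
  obtain ⟨M, hM⟩ := (hI.prod hK).exists_bound_of_continuousOn hF
  refine continuousOn_of_dominated (bound := fun _ => M) (fun x hx => ?_) (fun x hx => ?_)
    (integrableOn_const ((measure_mono hsK).trans_lt hK.measure_lt_top).ne) ?_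
  · have hFx : ContinuousOn (F x) s :=
      hF.comp (Continuous.prodMk_right x).continuousOn fun y hy => ⟨hx, hsK hy⟩
    exact hFx.aestronglyMeasurable hs
  · exact ae_restrict_of_forall_mem hs fun y hy => hM (x, y) ⟨hx, hsK hy⟩
  · exact ae_restrict_of_forall_mem hs fun y hy =>
      hF.comp (Continuous.prodMk_left y).continuousOn fun x hx => ⟨hx, hsK hy⟩

theorem continuousOn_Ico_setIntegral {Y : Type*} [TopologicalSpace Y] [MeasurableSpace Y]
    [OpensMeasurableSpace Y] [SecondCountableTopology Y] {μ : Measure Y}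
    [IsFiniteMeasureOnCompacts μ] {F : ℝ → Y → ℝ} {a b : ℝ} {K s : Set Y} (hK : IsCompact K)
    (hF : ContinuousOn (Function.uncurry F) (Ico a b ×ˢ K)) (hs : MeasurableSet s)
    (hsK : s ⊆ K) : ContinuousOn (fun x => ∫ y in s, F x y ∂μ) (Ico a b) := by
  refine continuousOn_of_locally_continuousOn fun t ht => ⟨Iio ((t + b) / 2), isOpen_Iio,
    by simp only [mem_Iio]; linarith [ht.2], ?_⟩
  have hsub : Ico a b ∩ Iio ((t + b) / 2) ⊆ Icc a ((t + b) / 2) :=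
    fun x hx => ⟨hx.1.1, hx.2.le⟩
  have hIcc : Icc a ((t + b) / 2) ⊆ Ico a b := fun x hx => ⟨hx.1, by linarith [hx.2, ht.2]⟩
  exact (continuousOn_setIntegral_of_isCompact isCompact_Icc hK
    (hF.mono (prod_mono hIcc subset_rfl)) hs hsK).mono hsub

theorem continuousOn_nL2sq_devF {T : ℝ} {ρ : ℝ → ℝ × ℝ → ℝ}
    (hρ : ContinuousOn (fun q : ℝ × (ℝ × ℝ) => ρ q.1 q.2) (Ico 0 T ×ˢ Strip)) :
    ContinuousOn (fun t => nL2sq (devF ρ t)) (Ico 0 T) := by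
  set K : Set (ℝ × ℝ) := Icc (-π) π ×ˢ Icc 0 π
  have hK : IsCompact K := isCompact_Icc.prod isCompact_Icc
  have hQK : Qdom ⊆ K := prod_mono Ioc_subset_Icc_self subset_rfl
  have hQ : MeasurableSet Qdom := measurableSet_Ioc.prod measurableSet_Icc
  have hρK : ContinuousOn (Function.uncurry ρ) (Ico 0 T ×ˢ K) :=
    hρ.mono (prod_mono subset_rfl (prod_mono (subset_univ _) subset_rfl))
  have hmean : ContinuousOn (fun t => meanQ (ρ t)) (Ico 0 T) :=
    (continuousOn_Ico_setIntegral hK hρK hQ hQK).const_smul (1 / (2 * π ^ 2))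
  have hdev : ContinuousOn (Function.uncurry fun t p => (ρ t p - meanQ (ρ t)) ^ 2)
      (Ico 0 T ×ˢ K) :=
    (hρK.sub (hmean.comp continuousOn_fst fun _ hq => hq.1)).pow 2
  exact continuousOn_Ico_setIntegral hK hdev hQ hQK

theorem nL2_sq (f : ℝ × ℝ → ℝ) : nL2 f ^ 2 = nL2sq f :=
  Real.sq_sqrt (integral_nonneg fun _ => sq_nonneg _)

theorem one_le_abs_two_pow_sub_two_pow {m n : ℕ} (h : m ≠ n) : 1 ≤ |(2 : ℝ) ^ m - 2 ^ n| := by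
  have hne : (2 : ℤ) ^ m - 2 ^ n ≠ 0 :=
    sub_ne_zero.2 fun h' => h (Nat.pow_right_injective le_rfl (by exact_mod_cast h'))
  exact_mod_cast Int.one_le_abs hne

theorem tendsto_atTop_of_tendsto_two_pow {α : Type*} {l : Filter α} {u : α → ℕ}
    (hu : Tendsto (fun k => (2 : ℝ) ^ u k) l atTop) : Tendsto u l atTop :=
  tendsto_atTop.2 fun M => (hu.eventually_gt_atTop (2 ^ M)).mono fun _ hk =>
    ((pow_lt_pow_iff_right₀ one_lt_two).1 hk).le

theorem tendsto_atTop_comp_of_separated {f : ℝ → ℝ} {a T : ℝ} {t : ℕ → ℝ}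
    (hf : ContinuousOn f (Ico a T)) (hblow : Tendsto f (nhdsWithin T (Iio T)) atTop)
    (ht : Monotone t) (hat : a ≤ t 0) (htT : ∀ k, t k < T)
    (hsep : ∀ k, 1 ≤ |f (t (k + 1)) - f (t k)|) :
    Tendsto (f ∘ t) atTop atTop := by
  have hbdd : BddAbove (range t) := ⟨T, forall_mem_range.2 fun k => (htT k).le⟩
  have hlim := tendsto_atTop_ciSup ht hbdd
  rcases (ciSup_le fun k => (htT k).le : ⨆ k, t k ≤ T).eq_or_lt with hT | hT
  · exact hblow.comp (tendsto_nhdsWithin_iff.2 ⟨hT ▸ hlim, Eventually.of_forall htT⟩)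
  · have hL : ⨆ k, t k ∈ Ico a T := ⟨hat.trans (le_ciSup hbdd 0), hT⟩
    have hft : Tendsto (f ∘ t) atTop (nhds (f (⨆ k, t k))) :=
      (hf _ hL).tendsto.comp <| tendsto_nhdsWithin_iff.2
        ⟨hlim, Eventually.of_forall fun k => ⟨hat.trans (ht k.zero_le), htT k⟩⟩
    have hdiff : Tendsto (fun k => f (t (k + 1)) - f (t k)) atTop (nhds 0) := by
      simpa using (hft.comp (tendsto_add_atTop_nat 1)).sub hft
    obtain ⟨k, hk⟩ := (Metric.tendsto_nhds.1 hdiff 1 one_pos).exists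
    rw [Real.dist_0_eq_abs] at hk
    exact absurd (hsep k) hk.not_ge

theorem Nat.exists_and_not_succ_of_le {P : ℕ → Prop} {a b : ℕ} (hab : a ≤ b) (ha : P a)
    (hb : ¬P b) : ∃ j, a ≤ j ∧ j < b ∧ P j ∧ ¬P (j + 1) := by
  induction b, hab using Nat.le_induction with
  | base => exact absurd ha hb
  | succ b hab ih =>
    by_cases hPb : P b
    · exact ⟨b, hab, b.lt_succ_self, hPb, hb⟩
    · obtain ⟨j, haj, hjb, hj, hj'⟩ := ih hPb
      exact ⟨j, haj, hjb.trans b.lt_succ_self, hj, hj'⟩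

theorem Set.ncard_eq_card_filter_of_subset {α : Type*} {S : Set α} {s : Finset α}
    [DecidablePred (· ∈ S)] (hS : S ⊆ s) : S.ncard = (s.filter (· ∈ S)).card := by
  rw [← Set.ncard_coe_finset, Finset.coe_filter]
  congr 1
  ext x
  exact ⟨fun hx => ⟨hS hx, hx⟩, fun hx => hx.2⟩

section Crossings

variable {lev : ℕ → ℕ} {N : ℕ}

theorem exists_goodIdx_of_le_of_lt (hup : ∀ k, 1 ≤ k → lev (k + 1) ≤ lev k + 1) {a b : ℕ}
    (ha1 : 1 ≤ a) (hab : a ≤ b) (ha : lev a ≤ N) (hb : N < lev b) :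
    ∃ j ∈ GoodIdx lev N, a ≤ j ∧ j < b := by
  obtain ⟨j, haj, hjb, hj, hj'⟩ :=
    Nat.exists_and_not_succ_of_le (P := fun k => lev k ≤ N) hab ha hb.not_ge
  have := hup j (ha1.trans haj)
  exact ⟨j, ⟨ha1.trans haj, by omega, by omega⟩, haj, hjb⟩

theorem exists_badIdx_of_lt_of_le (hdown : ∀ k, 1 ≤ k → lev k ≤ lev (k + 1) + 1) {a b : ℕ}
    (ha1 : 1 ≤ a) (hab : a ≤ b) (ha : N < lev a) (hb : lev b ≤ N) :
    ∃ j ∈ BadIdx lev N, a ≤ j ∧ j < b := by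
  obtain ⟨j, haj, hjb, hj, hj'⟩ :=
    Nat.exists_and_not_succ_of_le (P := fun k => N < lev k) hab ha hb.not_gt
  have := hdown j (ha1.trans haj)
  exact ⟨j, ⟨ha1.trans haj, by omega, by omega⟩, haj, hjb⟩

theorem exists_badIdx_between (hdown : ∀ k, 1 ≤ k → lev k ≤ lev (k + 1) + 1)
    {k₁ k₂ : ℕ} (hk₁ : k₁ ∈ GoodIdx lev N) (hk₂ : k₂ ∈ GoodIdx lev N) (hlt : k₁ < k₂) :
    ∃ j ∈ BadIdx lev N, k₁ < j ∧ j < k₂ :=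
  exists_badIdx_of_lt_of_le hdown (by omega) hlt (by rw [hk₁.2.2]; omega) hk₂.2.1.le

theorem exists_goodIdx_between (hup : ∀ k, 1 ≤ k → lev (k + 1) ≤ lev k + 1)
    {k₁ k₂ : ℕ} (hk₁ : k₁ ∈ BadIdx lev N) (hk₂ : k₂ ∈ BadIdx lev N) (hlt : k₁ < k₂) :
    ∃ j ∈ GoodIdx lev N, k₁ < j ∧ j < k₂ :=
  exists_goodIdx_of_le_of_lt hup (by omega) hlt hk₁.2.2.le (by rw [hk₂.2.1]; omega)

theorem finite_setOf_le_of_tendsto_atTop (hlev : Tendsto lev atTop atTop) (M : ℕ) :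
    {k | lev k ≤ M}.Finite :=
  (Filter.eventually_cofinite.1 (Nat.cofinite_eq_atTop ▸ hlev.eventually_gt_atTop M)).subset
    fun _ hk => not_lt.2 hk

theorem goodIdx_finite (hlev : Tendsto lev atTop atTop) : (GoodIdx lev N).Finite :=
  (finite_setOf_le_of_tendsto_atTop hlev N).subset fun _ hk => hk.2.1.le

theorem badIdx_finite (hlev : Tendsto lev atTop atTop) : (BadIdx lev N).Finite :=
  (finite_setOf_le_of_tendsto_atTop hlev (N + 1)).subset fun _ hk => hk.2.1.le

theorem exists_ge_and_lt_of_tendsto_atTop (hlev : Tendsto lev atTop atTop) (a : ℕ) :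
    ∃ K, a ≤ K ∧ N < lev K :=
  ((eventually_ge_atTop a).and (hlev.eventually_gt_atTop N)).exists

theorem exists_goodIdx_forall_le (hlev : Tendsto lev atTop atTop)
    (hup : ∀ k, 1 ≤ k → lev (k + 1) ≤ lev k + 1) (h1 : lev 1 ≤ N) :
    ∃ k ∈ GoodIdx lev N, ∀ j ∈ GoodIdx lev N ∪ BadIdx lev N, k ≤ j := by
  obtain ⟨K, hK1, hK⟩ := exists_ge_and_lt_of_tendsto_atTop hlev 1
  obtain ⟨j₀, hj₀, -⟩ := exists_goodIdx_of_le_of_lt hup le_rfl hK1 h1 hK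
  have hne : (GoodIdx lev N).Nonempty := ⟨j₀, hj₀⟩
  refine ⟨sInf (GoodIdx lev N), Nat.sInf_mem hne, ?_⟩
  rintro j (hj | hj)
  · exact Nat.sInf_le hj
  · by_contra! hlt
    obtain ⟨j', hj', -, hj'j⟩ :=
      exists_goodIdx_of_le_of_lt hup le_rfl hj.1 h1 (by rw [hj.2.1]; omega)
    exact (Nat.sInf_le hj').not_gt (hj'j.trans hlt)

theorem exists_goodIdx_forall_ge (hlev : Tendsto lev atTop atTop)
    (hup : ∀ k, 1 ≤ k → lev (k + 1) ≤ lev k + 1) (h1 : lev 1 ≤ N) :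
    ∃ k ∈ GoodIdx lev N, ∀ j ∈ GoodIdx lev N ∪ BadIdx lev N, j ≤ k := by
  obtain ⟨K, hK1, hK⟩ := exists_ge_and_lt_of_tendsto_atTop hlev 1
  obtain ⟨j₀, hj₀, -⟩ := exists_goodIdx_of_le_of_lt hup le_rfl hK1 h1 hK
  obtain ⟨k, hk, hmax⟩ := Set.exists_max_image _ id (goodIdx_finite hlev) ⟨j₀, hj₀⟩
  refine ⟨k, hk, ?_⟩
  rintro j (hj | hj)
  · exact hmax j hj
  · by_contra! hlt
    obtain ⟨K', hK'j, hK'⟩ := exists_ge_and_lt_of_tendsto_atTop hlev (j + 1)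
    obtain ⟨j', hj', hjj', -⟩ :=
      exists_goodIdx_of_le_of_lt hup (by omega) hK'j hj.2.2.le hK'
    exact (hmax j' hj').not_gt (by simp only [id]; omega)

theorem ncard_goodIdx_eq_ncard_badIdx_add_one (hlev : Tendsto lev atTop atTop)
    (hup : ∀ k, 1 ≤ k → lev (k + 1) ≤ lev k + 1)
    (hdown : ∀ k, 1 ≤ k → lev k ≤ lev (k + 1) + 1) (h1 : lev 1 ≤ N) :
    (GoodIdx lev N).ncard = (BadIdx lev N).ncard + 1 := by
  classical
  obtain ⟨K, hK⟩ := eventually_atTop.1 (hlev.eventually_gt_atTop (N + 1))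
  set s := Finset.Ico 1 (K + 1)
  have hsub : ∀ j, 1 ≤ j → lev j ≤ N + 1 → j ∈ s := fun j hj1 hj => by
    have := mt (hK j) hj.not_gt
    simp only [s, Finset.mem_Ico]
    omega
  rw [Set.ncard_eq_card_filter_of_subset (s := s)
      fun j hj => hsub j hj.1 (hj.2.1.le.trans N.le_succ),
    Set.ncard_eq_card_filter_of_subset (s := s) fun j hj => hsub j hj.1 hj.2.1.le]
  let χ : ℕ → ℤ := fun k => if N < lev k then 1 else 0
  have hχ : ∀ k ∈ s, χ (k + 1) - χ k =
      (if k ∈ GoodIdx lev N then 1 else 0) - (if k ∈ BadIdx lev N then 1 else 0) := by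
    intro k hk
    have hk1 : 1 ≤ k := (Finset.mem_Ico.1 hk).1
    have := hup k hk1
    have := hdown k hk1
    simp only [χ, GoodIdx, BadIdx, Set.mem_ofPred_eq]
    split_ifs <;> omega
  have htel := Finset.sum_Ico_sub χ (show 1 ≤ K + 1 by omega)
  rw [Finset.sum_congr rfl hχ, Finset.sum_sub_distrib, Finset.sum_boole, Finset.sum_boole] at htel
  have hK1 : N < lev (K + 1) := by have := hK (K + 1) (by omega); omega
  simp only [χ, hK1, if_true, h1.not_gt, if_false] at htel
  omega

end Crossings

theorem good_bad_interval_structure_general (g T : ℝ) (ρ c ψ : ℝ → ℝ × ℝ → ℝ)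
    (hsol : IsRegSol g (Ico 0 T) ρ c ψ)
    (hblow : Tendsto (fun t => nL2 (devF ρ t)) (nhdsWithin T (Iio T)) atTop)
    (N₀ : ℕ) (hN₀ : 1 ≤ N₀)
    (tk : ℕ → ℝ) (lev : ℕ → ℕ)
    (ht1mem : 0 ≤ tk 1)
    (hlev1 : lev 1 = N₀)
    (hlevge : ∀ k, 1 ≤ k → N₀ ≤ lev k)
    (hval : ∀ k, 1 ≤ k → nL2sq (devF ρ (tk k)) = 2 ^ lev k)
    (hmono : ∀ k, 1 ≤ k → tk k < tk (k + 1) ∧ tk (k + 1) < T)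
    (hstep : ∀ k, 1 ≤ k → lev (k + 1) = lev k - 1 ∨ lev (k + 1) = lev k + 1) :
    ∀ N : ℕ, N₀ ≤ N →
      (GoodIdx lev N).Finite ∧ (BadIdx lev N).Finite ∧
      (∀ k₁ ∈ GoodIdx lev N, ∀ k₂ ∈ GoodIdx lev N, k₁ < k₂ →
        ∃ j ∈ BadIdx lev N, k₁ < j ∧ j < k₂) ∧
      (∀ k₁ ∈ BadIdx lev N, ∀ k₂ ∈ BadIdx lev N, k₁ < k₂ →
        ∃ j ∈ GoodIdx lev N, k₁ < j ∧ j < k₂) ∧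
      (∃ k ∈ GoodIdx lev N, ∀ j ∈ GoodIdx lev N ∪ BadIdx lev N, k ≤ j) ∧
      (∃ k ∈ GoodIdx lev N, ∀ j ∈ GoodIdx lev N ∪ BadIdx lev N, j ≤ k) ∧
      (GoodIdx lev N).ncard = (BadIdx lev N).ncard + 1 := by
  have hblow_sq : Tendsto (fun t => nL2sq (devF ρ t)) (nhdsWithin T (Iio T)) atTop := by
    simpa only [Function.comp_def, nL2_sq] using (tendsto_pow_atTop two_ne_zero).comp hblow
  have hsep : ∀ k, 1 ≤ |nL2sq (devF ρ (tk (k + 1 + 1))) - nL2sq (devF ρ (tk (k + 1)))| := by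
    intro k
    rw [hval _ (by omega), hval _ (by omega)]
    refine one_le_abs_two_pow_sub_two_pow ?_
    have := hlevge (k + 1) (by omega)
    rcases hstep (k + 1) (by omega) with h | h <;> omega
  have hlev : Tendsto lev atTop atTop := by
    refine (tendsto_add_atTop_iff_nat 1).1 (tendsto_atTop_of_tendsto_two_pow ?_)
    refine (tendsto_atTop_comp_of_separated (t := fun k => tk (k + 1))
      (continuousOn_nL2sq_devF hsol.cont) hblow_sq
      (monotone_nat_of_le_succ fun k => (hmono (k + 1) (by omega)).1.le) ht1mem
      (fun k => (hmono (k + 1) (by omega)).1.trans (hmono (k + 1) (by omega)).2) hsep).congr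
      fun k => hval (k + 1) (by omega)
  have hup : ∀ k, 1 ≤ k → lev (k + 1) ≤ lev k + 1 := fun k hk => by
    rcases hstep k hk with h | h <;> omega
  have hdown : ∀ k, 1 ≤ k → lev k ≤ lev (k + 1) + 1 := fun k hk => by
    rcases hstep k hk with h | h <;> omega
  intro N hN
  have h1 : lev 1 ≤ N := hlev1 ▸ hN
  exact ⟨goodIdx_finite hlev, badIdx_finite hlev,
    fun _ hk₁ _ hk₂ => exists_badIdx_between hdown hk₁ hk₂,
    fun _ hk₁ _ hk₂ => exists_goodIdx_between hup hk₁ hk₂,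
    exists_goodIdx_forall_le hlev hup h1, exists_goodIdx_forall_ge hlev hup h1,
    ncard_goodIdx_eq_ncard_badIdx_add_one hlev hup hdown h1⟩

/-- Structure of good/bad intervals of a given level `N ≥ N₀` for a solution
blowing up at time `T`: given the switching times `t_k` (with level function `lev`), there are
only finitely many good and bad intervals of level `N`; they intertwine; the first and last
intervals of level `N` are good; and the number of good intervals of level `N` exceeds the
number of bad ones by exactly one. -/
theorem good_bad_interval_structure (g T : ℝ) (ρ c ψ : ℝ → ℝ × ℝ → ℝ) (hT : 0 < T)
    (hsol : IsRegSol g (Ico 0 T) ρ c ψ) (hpos : NonnegSol (Ico 0 T) ρ)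
    (hblow : Tendsto (fun t => nL2 (devF ρ t)) (nhdsWithin T (Iio T)) atTop)
    (N₀ : ℕ) (hN₀ : 1 ≤ N₀) (hinit : nL2sq (devF ρ 0) < (2 : ℝ) ^ (N₀ - 1))
    (tk : ℕ → ℝ) (lev : ℕ → ℕ)
    (ht1 : tk 1 = sSup {t ∈ Ico (0 : ℝ) T | nL2sq (devF ρ t) = 2 ^ N₀})
    (ht1mem : 0 ≤ tk 1)
    (hlev1 : lev 1 = N₀)
    (hlevge : ∀ k, 1 ≤ k → N₀ ≤ lev k)
    (hval : ∀ k, 1 ≤ k → nL2sq (devF ρ (tk k)) = 2 ^ lev k)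
    (hmono : ∀ k, 1 ≤ k → tk k < tk (k + 1) ∧ tk (k + 1) < T)
    (hstep : ∀ k, 1 ≤ k → lev (k + 1) = lev k - 1 ∨ lev (k + 1) = lev k + 1)
    (hmin : ∀ k, 1 ≤ k → ∀ t ∈ Ioo (tk k) (tk (k + 1)),
      nL2sq (devF ρ t) ≠ 2 ^ (lev k - 1) ∧ nL2sq (devF ρ t) ≠ 2 ^ (lev k + 1)) :
    ∀ N : ℕ, N₀ ≤ N →
      (GoodIdx lev N).Finite ∧ (BadIdx lev N).Finite ∧
      (∀ k₁ ∈ GoodIdx lev N, ∀ k₂ ∈ GoodIdx lev N, k₁ < k₂ →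
        ∃ j ∈ BadIdx lev N, k₁ < j ∧ j < k₂) ∧
      (∀ k₁ ∈ BadIdx lev N, ∀ k₂ ∈ BadIdx lev N, k₁ < k₂ →
        ∃ j ∈ GoodIdx lev N, k₁ < j ∧ j < k₂) ∧
      (∃ k ∈ GoodIdx lev N, ∀ j ∈ GoodIdx lev N ∪ BadIdx lev N, k ≤ j) ∧
      (∃ k ∈ GoodIdx lev N, ∀ j ∈ GoodIdx lev N ∪ BadIdx lev N, j ≤ k) ∧
      (GoodIdx lev N).ncard = (BadIdx lev N).ncard + 1 :=
  good_bad_interval_structure_general g T ρ c ψ hsol hblow N₀ hN₀ tk lev ht1mem hlev1 hlevge hval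
    hmono hstep
end
end

section
/- Let ρ be a regular, nonnegative solution of the Patlak–Keller–Segel–IPM system on [0,T_*). There exist a natural number N₀ depending only on ρ_M and a universal constant C > 0 such that for all N ≥ N₀ the following holds: if 0 ≤ s < r < T_* and 2^{N−1} ≤ ‖ρ(·,t) − ρ_M‖²_{L²} ≤ 2^{N+2} for all t ∈ (s,r), then |∫_s^r ∫_Ω ρ ∂_{x₂} (−Δ_N)⁻¹(ρ − ρ_M) dx dt| ≤ C ρ_M^{2/3} 2^{2N/3} (r − s). -/
open MeasureTheory Real Set Filter

noncomputable section

/-!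
Mass is conserved, so `ρ(t)` has mean `m = ρ_M` for all `t`; the hypothesis bounds
`D = ‖ρ - m‖²_{L²}` by `2^{N+2}`, and `N ≥ N₀(m)` forces `m² ≤ D`. At a fixed time let
`c = (−Δ_N)⁻¹(ρ - m)` and `G = ‖∇c‖²`. Integrating by parts, `G = ∫ (ρ - m) c` and
`‖∂₁∂₂c‖² ≤ D/4`. A one-dimensional trace inequality along horizontal and vertical segments then
bounds the oscillation of `c`, hence (`c` having mean zero) its sup norm, by `≲ (G + √(GD))^{1/2}`.
Since `ρ ≥ 0` gives `‖ρ - m‖_{L¹} ≤ 4π²m`, this yields `G² ≲ m²(G + √(GD))`, i.e. `G³ ≲ m⁴D`.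
Finally `(∫ ρ ∂₂c)² ≤ ‖ρ‖²_{L²} G ≲ D G`, so `|∫ ρ ∂₂c| ≲ m^{2/3} D^{2/3} ≲ m^{2/3} 2^{2N/3}`
pointwise in time, and the bound follows by integrating over `(s, r)`.
-/

section OneVariable

lemma integral_abs_mul_le_sqrt_mul_sqrt {α : Type*} [MeasurableSpace α] {μ : Measure α}
    {f g : α → ℝ} (hf : MemLp f 2 μ) (hg : MemLp g 2 μ) :
    ∫ a, |f a * g a| ∂μ ≤ √(∫ a, f a ^ 2 ∂μ) * √(∫ a, g a ^ 2 ∂μ) := by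
  have h := integral_mul_le_Lp_mul_Lq_of_nonneg Real.HolderConjugate.two_two
    (ae_of_all μ fun a => abs_nonneg (f a)) (ae_of_all μ fun a => abs_nonneg (g a))
    (by simpa using hf.norm) (by simpa using hg.norm)
  simpa [abs_mul, Real.sqrt_eq_rpow] using h

variable {u u' : ℝ → ℝ} {lo hi : ℝ}

lemma integral_Icc_eq_sub_of_hasDerivAt (hu : ∀ x, HasDerivAt u (u' x) x) (hu' : Continuous u')
    {a b : ℝ} (hab : a ≤ b) : ∫ x in Icc a b, u' x = u b - u a := by
  rw [integral_Icc_eq_integral_Ioc, ← intervalIntegral.integral_of_le hab]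
  exact intervalIntegral.integral_eq_sub_of_hasDerivAt (fun x _ => hu x)
    (hu'.intervalIntegrable a b)

lemma abs_intervalIntegral_le_setIntegral_abs (hu : Continuous u) {a b : ℝ}
    (ha : a ∈ Icc lo hi) (hb : b ∈ Icc lo hi) :
    |∫ x in a..b, u x| ≤ ∫ x in Icc lo hi, |u x| := by
  rw [intervalIntegral.abs_integral_eq_abs_integral_uIoc]
  refine (abs_integral_le_integral_abs).trans (setIntegral_mono_set ?_ ?_ ?_)
  · exact hu.abs.continuousOn.integrableOn_compact isCompact_Icc
  · exact ae_of_all _ fun x => abs_nonneg (u x)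
  · exact (uIoc_subset_uIcc.trans (uIcc_subset_Icc ha hb)).eventuallyLE

lemma abs_sub_le_sqrt_mul_sqrt_of_hasDerivAt (hu : ∀ x, HasDerivAt u (u' x) x)
    (hu' : Continuous u') {a b : ℝ} (ha : a ∈ Icc lo hi) (hb : b ∈ Icc lo hi) :
    |u b - u a| ≤ √(hi - lo) * √(∫ x in Icc lo hi, u' x ^ 2) := by
  have hmemLp : ∀ {v : ℝ → ℝ}, Continuous v → MemLp v 2 (volume.restrict (Icc lo hi)) :=
    fun hv => (memLp_two_iff_integrable_sq hv.aestronglyMeasurable).2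
      ((hv.pow 2).continuousOn.integrableOn_compact isCompact_Icc)
  have hCS := integral_abs_mul_le_sqrt_mul_sqrt (hmemLp (v := fun _ => 1) continuous_const)
    (hmemLp hu')
  have hlen : ∫ _ in Icc lo hi, (1 : ℝ) ^ 2 = hi - lo := by
    simp [ha.1.trans ha.2]
  simp only [one_mul, hlen] at hCS
  rw [← intervalIntegral.integral_eq_sub_of_hasDerivAt (fun x _ => hu x)
    (hu'.intervalIntegrable a b)]
  exact (abs_intervalIntegral_le_setIntegral_abs hu' ha hb).trans hCS

lemma sq_le_inv_mul_integral_sq_add (hu : ∀ x, HasDerivAt u (u' x) x) (hu' : Continuous u')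
    (hlt : lo < hi) {y₀ : ℝ} (hy₀ : y₀ ∈ Icc lo hi) :
    u y₀ ^ 2 ≤ (hi - lo)⁻¹ * (∫ y in Icc lo hi, u y ^ 2) + ∫ y in Icc lo hi, |2 * u y * u' y| := by
  set K := ∫ y in Icc lo hi, |2 * u y * u' y|
  have hcont : Continuous u := continuous_iff_continuousAt.2 fun x => (hu x).continuousAt
  have hsq : ∀ x, HasDerivAt (fun y => u y ^ 2) (2 * u x * u' x) x := fun x => by
    simpa only [sq] using ((hu x).fun_mul (hu x)).congr_deriv (by ring)
  have hpoint : ∀ y ∈ Icc lo hi, u y₀ ^ 2 - K ≤ u y ^ 2 := fun y hy => by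
    have hftc := abs_intervalIntegral_le_setIntegral_abs (u := fun x => 2 * u x * u' x)
      (by fun_prop) hy hy₀
    rw [intervalIntegral.integral_eq_sub_of_hasDerivAt (fun x _ => hsq x)
      ((by fun_prop : Continuous fun x => 2 * u x * u' x).intervalIntegrable _ _)] at hftc
    linarith [le_abs_self (u y₀ ^ 2 - u y ^ 2)]
  have hint := setIntegral_mono_on (integrableOn_const (μ := volume) measure_Icc_lt_top.ne)
    ((hcont.fun_pow 2).continuousOn.integrableOn_compact isCompact_Icc) measurableSet_Icc hpoint
  rw [setIntegral_const, measureReal_def, Real.volume_Icc, ENNReal.toReal_ofReal (by linarith),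
    smul_eq_mul] at hint
  rw [← sub_le_iff_le_add, ← div_eq_inv_mul, le_div_iff₀ (by linarith)]
  linarith

lemma abs_intervalIntegral_le_of_forall_Ioo {s r B : ℝ} (hsr : s ≤ r)
    (hB : ∀ t ∈ Ioo s r, |u t| ≤ B) : |∫ t in s..r, u t| ≤ B * (r - s) := by
  have h := intervalIntegral.norm_integral_le_of_norm_le_const_ae (a := s) (b := r) (f := u) (by
    filter_upwards [measure_eq_zero_iff_ae_notMem.1 (measure_singleton r)] with t htr ht
    rw [uIoc_of_le hsr] at ht
    exact hB t ⟨ht.1, lt_of_le_of_ne ht.2 htr⟩)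
  rwa [abs_of_nonneg (sub_nonneg.2 hsr)] at h

end OneVariable

section Domain

def Qbar : Set (ℝ × ℝ) := Icc (-π) π ×ˢ Icc 0 π

lemma Qdom_subset_Qbar : Qdom ⊆ Qbar :=
  prod_mono Ioc_subset_Icc_self subset_rfl

lemma Qbar_subset_Strip : Qbar ⊆ Strip :=
  prod_mono (subset_univ _) subset_rfl

lemma Qdom_subset_Strip : Qdom ⊆ Strip :=
  Qdom_subset_Qbar.trans Qbar_subset_Strip

lemma isCompact_Qbar : IsCompact Qbar :=
  isCompact_Icc.prod isCompact_Icc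

lemma measurableSet_Qdom : MeasurableSet Qdom :=
  measurableSet_Ioc.prod measurableSet_Icc

lemma volume_real_Qdom : volume.real Qdom = 2 * π ^ 2 := by
  rw [measureReal_def, Qdom, Measure.volume_eq_prod, Measure.prod_prod, Real.volume_Ioc,
    Real.volume_Icc, ENNReal.toReal_mul, ENNReal.toReal_ofReal (by linarith [pi_pos]),
    ENNReal.toReal_ofReal (by linarith [pi_pos])]
  ring

lemma volume_Qdom_lt_top : volume Qdom < ⊤ :=
  (measure_mono Qdom_subset_Qbar).trans_lt isCompact_Qbar.measure_lt_top

lemma setIntegral_Qdom_const (a : ℝ) : ∫ _ in Qdom, a = 2 * π ^ 2 * a := by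
  rw [setIntegral_const, volume_real_Qdom, smul_eq_mul]

lemma integrableOn_Qdom {f : ℝ × ℝ → ℝ} (hf : Continuous f) : IntegrableOn f Qdom :=
  (hf.continuousOn.integrableOn_compact isCompact_Qbar).mono_set Qdom_subset_Qbar

lemma memLp_two_Qdom {f : ℝ × ℝ → ℝ} (hf : Continuous f) :
    MemLp f 2 (volume.restrict Qdom) :=
  (memLp_two_iff_integrable_sq hf.aestronglyMeasurable).2 (integrableOn_Qdom (hf.pow 2))

lemma integral_Qdom_eq_integral_integral {f : ℝ × ℝ → ℝ} (hf : Continuous f) :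
    ∫ p in Qdom, f p = ∫ x in Icc (-π) π, ∫ y in Icc 0 π, f (x, y) := by
  rw [Qdom, Measure.volume_eq_prod, setIntegral_prod f (integrableOn_Qdom hf),
    integral_Icc_eq_integral_Ioc]

lemma integral_Qdom_eq_integral_integral_swap {f : ℝ × ℝ → ℝ} (hf : Continuous f) :
    ∫ p in Qdom, f p = ∫ y in Icc 0 π, ∫ x in Icc (-π) π, f (x, y) := by
  rw [integral_Qdom_eq_integral_integral hf]
  refine integral_integral_swap ?_
  rw [Measure.prod_restrict, ← Measure.volume_eq_prod]
  exact hf.continuousOn.integrableOn_compact isCompact_Qbar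

lemma nL2sq_nonneg (f : ℝ × ℝ → ℝ) : 0 ≤ nL2sq f :=
  integral_nonneg fun _ => sq_nonneg _

lemma gradL2sq_nonneg (f : ℝ × ℝ → ℝ) : 0 ≤ gradL2sq f :=
  integral_nonneg fun _ => add_nonneg (sq_nonneg _) (sq_nonneg _)

lemma integral_Qdom_eq_mul_meanQ (f : ℝ × ℝ → ℝ) : ∫ p in Qdom, f p = 2 * π ^ 2 * meanQ f := by
  rw [meanQ]
  field_simp

lemma sq_integral_mul_le {f g : ℝ × ℝ → ℝ} (hf : Continuous f) (hg : Continuous g) :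
    (∫ p in Qdom, f p * g p) ^ 2 ≤ nL2sq f * nL2sq g := by
  have hCS := abs_integral_le_integral_abs.trans
    (integral_abs_mul_le_sqrt_mul_sqrt (memLp_two_Qdom hf) (memLp_two_Qdom hg))
  calc (∫ p in Qdom, f p * g p) ^ 2 = |∫ p in Qdom, f p * g p| ^ 2 := (sq_abs _).symm
    _ ≤ (√(nL2sq f) * √(nL2sq g)) ^ 2 := pow_le_pow_left₀ (abs_nonneg _) hCS 2
    _ = nL2sq f * nL2sq g := by rw [mul_pow, sq_sqrt (nL2sq_nonneg f), sq_sqrt (nL2sq_nonneg g)]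

end Domain

section Mean

variable {f : ℝ × ℝ → ℝ}

lemma meanQ_nonneg (hf0 : ∀ p ∈ Qdom, 0 ≤ f p) : 0 ≤ meanQ f :=
  mul_nonneg (by positivity) (setIntegral_nonneg measurableSet_Qdom hf0)

lemma nL1_sub_meanQ_le (hf : IntegrableOn f Qdom) (hf0 : ∀ p ∈ Qdom, 0 ≤ f p) :
    nL1 (fun p => f p - meanQ f) ≤ 4 * π ^ 2 * meanQ f := by
  have hm := meanQ_nonneg hf0
  have hconst : IntegrableOn (fun _ => meanQ f) Qdom := integrableOn_const volume_Qdom_lt_top.ne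
  calc nL1 (fun p => f p - meanQ f) ≤ ∫ p in Qdom, (f p + meanQ f) :=
        setIntegral_mono_on (hf.sub hconst).abs (hf.add hconst) measurableSet_Qdom fun p hp =>
          abs_le.2 ⟨by linarith [hf0 p hp], by linarith [hf0 p hp]⟩
    _ = 4 * π ^ 2 * meanQ f := by
        rw [integral_add hf hconst, integral_Qdom_eq_mul_meanQ f, setIntegral_Qdom_const]
        ring

lemma nL2sq_eq_nL2sq_sub_meanQ_add (hf : Continuous f) :
    nL2sq f = nL2sq (fun p => f p - meanQ f) + 2 * π ^ 2 * meanQ f ^ 2 := by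
  have hsplit : ∀ p, f p ^ 2 = ((f p - meanQ f) ^ 2 + 2 * meanQ f * f p) - meanQ f ^ 2 :=
    fun p => by ring
  simp only [nL2sq, hsplit]
  rw [integral_sub (integrableOn_Qdom (by fun_prop)) (integrableOn_const volume_Qdom_lt_top.ne),
    integral_add (integrableOn_Qdom (by fun_prop)) (integrableOn_Qdom (by fun_prop)),
    integral_const_mul, integral_Qdom_eq_mul_meanQ f, setIntegral_Qdom_const]
  ring

end Mean

section PartialDerivatives

variable {f g : ℝ × ℝ → ℝ}

lemma hasDerivAt_pd1 {x y : ℝ} (hf : DifferentiableAt ℝ f (x, y)) :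
    HasDerivAt (fun u => f (u, y)) (pd1 f (x, y)) x :=
  hf.hasFDerivAt.comp_hasDerivAt x ((hasDerivAt_id x).prodMk (hasDerivAt_const x y))

lemma hasDerivAt_pd2 {x y : ℝ} (hf : DifferentiableAt ℝ f (x, y)) :
    HasDerivAt (fun v => f (x, v)) (pd2 f (x, y)) y :=
  hf.hasFDerivAt.comp_hasDerivAt y ((hasDerivAt_const y x).prodMk (hasDerivAt_id y))

lemma contDiff_pd1 {n : WithTop ℕ∞} (hf : ContDiff ℝ (n + 1) f) : ContDiff ℝ n (pd1 f) :=
  (hf.fderiv_right le_rfl).clm_apply contDiff_const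

lemma contDiff_pd2 {n : WithTop ℕ∞} (hf : ContDiff ℝ (n + 1) f) : ContDiff ℝ n (pd2 f) :=
  (hf.fderiv_right le_rfl).clm_apply contDiff_const

lemma ContDiff.pd1 (hf : ContDiff ℝ (⊤ : ℕ∞) f) : ContDiff ℝ (⊤ : ℕ∞) (pd1 f) :=
  contDiff_pd1 (by simpa using hf)

lemma ContDiff.pd2 (hf : ContDiff ℝ (⊤ : ℕ∞) f) : ContDiff ℝ (⊤ : ℕ∞) (pd2 f) :=
  contDiff_pd2 (by simpa using hf)

lemma continuous_pd1 (hf : ContDiff ℝ 1 f) : Continuous (pd1 f) :=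
  (contDiff_pd1 (n := 0) hf).continuous

lemma continuous_pd2 (hf : ContDiff ℝ 1 f) : Continuous (pd2 f) :=
  (contDiff_pd2 (n := 0) hf).continuous

lemma pd1_mul (hf : Differentiable ℝ f) (hg : Differentiable ℝ g) (p : ℝ × ℝ) :
    pd1 (fun q => f q * g q) p = pd1 f p * g p + f p * pd1 g p := by
  simp only [pd1, fderiv_fun_mul (hf p) (hg p), add_apply, smul_apply, smul_eq_mul]
  ring

lemma pd2_mul (hf : Differentiable ℝ f) (hg : Differentiable ℝ g) (p : ℝ × ℝ) :
    pd2 (fun q => f q * g q) p = pd2 f p * g p + f p * pd2 g p := by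
  simp only [pd2, fderiv_fun_mul (hf p) (hg p), add_apply, smul_apply, smul_eq_mul]
  ring

lemma pd1_pd2_comm (hf : ContDiff ℝ 2 f) : pd1 (pd2 f) = pd2 (pd1 f) := by
  ext p
  have hdf : Differentiable ℝ (fderiv ℝ f) :=
    (hf.fderiv_right (m := 1) (by norm_num)).differentiable (by simp)
  have hcomp : ∀ v w : ℝ × ℝ,
      fderiv ℝ (fun q => fderiv ℝ f q v) p w = fderiv ℝ (fderiv ℝ f) p w v := fun v w => by
    rw [fderiv_clm_apply (hdf p) (differentiableAt_const v)]
    simp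
  show fderiv ℝ (fun q => fderiv ℝ f q (0, 1)) p (1, 0)
    = fderiv ℝ (fun q => fderiv ℝ f q (1, 0)) p (0, 1)
  rw [hcomp, hcomp]
  exact second_derivative_symmetric (fun y => ((hf.differentiable (by simp)) y).hasFDerivAt)
    (hdf p).hasFDerivAt _ _

lemma pd1_eq_zero_of_forall_eq_zero (hf : Differentiable ℝ f) {y : ℝ}
    (hline : ∀ x, f (x, y) = 0) (x : ℝ) : pd1 f (x, y) = 0 := by
  have h := hasDerivAt_pd1 (hf (x, y))
  simp only [hline] at h
  exact h.unique (hasDerivAt_const x 0)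

lemma Periodic2.mul (hf : Periodic2 f) (hg : Periodic2 g) : Periodic2 (fun p => f p * g p) :=
  fun p => by simp only [hf p, hg p]

lemma Periodic2.fderiv (hp : Periodic2 f) (p : ℝ × ℝ) :
    fderiv ℝ f (p.1 + 2 * π, p.2) = fderiv ℝ f p := by
  have hshift : ∀ q : ℝ × ℝ, q + (2 * π, 0) = (q.1 + 2 * π, q.2) := fun q => by ext <;> simp
  have hf : (fun q : ℝ × ℝ => f (q + (2 * π, 0))) = f := funext fun q => by rw [hshift]; exact hp q
  rw [← hshift, ← fderiv_comp_add_right, hf]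

lemma Periodic2.pd1 (hp : Periodic2 f) : Periodic2 (pd1 f) :=
  fun p => by simp only [_root_.pd1, hp.fderiv p]

lemma Periodic2.pd2 (hp : Periodic2 f) : Periodic2 (pd2 f) :=
  fun p => by simp only [_root_.pd2, hp.fderiv p]

end PartialDerivatives

section IntegrationByParts

variable {f g : ℝ × ℝ → ℝ}

lemma integral_pd1_eq_zero (hf : ContDiff ℝ 1 f) (hp : Periodic2 f) :
    ∫ p in Qdom, pd1 f p = 0 := by
  have hslice : ∀ y, ∫ x in Icc (-π) π, pd1 f (x, y) = 0 := fun y => by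
    rw [integral_Icc_eq_sub_of_hasDerivAt
      (fun x => hasDerivAt_pd1 (hf.differentiable one_ne_zero _))
      ((continuous_pd1 hf).comp (by fun_prop)) (by linarith [pi_pos]), sub_eq_zero]
    simpa [show -π + 2 * π = π by ring] using hp (-π, y)
  simp [integral_Qdom_eq_integral_integral_swap (continuous_pd1 hf), hslice]

lemma integral_pd2_eq_zero (hf : ContDiff ℝ 1 f) (hb : ∀ x, f (x, π) = f (x, 0)) :
    ∫ p in Qdom, pd2 f p = 0 := by
  have hslice : ∀ x, ∫ y in Icc 0 π, pd2 f (x, y) = 0 := fun x => by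
    rw [integral_Icc_eq_sub_of_hasDerivAt
      (fun y => hasDerivAt_pd2 (hf.differentiable one_ne_zero _))
      ((continuous_pd2 hf).comp (by fun_prop)) pi_pos.le, hb, sub_self]
  simp [integral_Qdom_eq_integral_integral (continuous_pd2 hf), hslice]

lemma integral_mul_pd1_eq_neg (hf : ContDiff ℝ 1 f) (hg : ContDiff ℝ 1 g) (hfp : Periodic2 f)
    (hgp : Periodic2 g) : ∫ p in Qdom, f p * pd1 g p = -∫ p in Qdom, pd1 f p * g p := by
  have h := integral_pd1_eq_zero (hf.mul hg) (hfp.mul hgp)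
  simp only [pd1_mul (hf.differentiable one_ne_zero) (hg.differentiable one_ne_zero)] at h
  rw [integral_add (integrableOn_Qdom (f := fun p => pd1 f p * g p)
    ((continuous_pd1 hf).mul hg.continuous)) (integrableOn_Qdom (f := fun p => f p * pd1 g p)
    (hf.continuous.mul (continuous_pd1 hg)))] at h
  linarith

lemma integral_mul_pd2_eq_neg (hf : ContDiff ℝ 1 f) (hg : ContDiff ℝ 1 g)
    (hb : ∀ x, f (x, π) * g (x, π) = f (x, 0) * g (x, 0)) :
    ∫ p in Qdom, f p * pd2 g p = -∫ p in Qdom, pd2 f p * g p := by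
  have h := integral_pd2_eq_zero (hf.mul hg) hb
  simp only [pd2_mul (hf.differentiable one_ne_zero) (hg.differentiable one_ne_zero)] at h
  rw [integral_add (integrableOn_Qdom (f := fun p => pd2 f p * g p)
    ((continuous_pd2 hf).mul hg.continuous)) (integrableOn_Qdom (f := fun p => f p * pd2 g p)
    (hf.continuous.mul (continuous_pd2 hg)))] at h
  linarith

end IntegrationByParts

section SupNorm

variable {c h : ℝ × ℝ → ℝ}

lemma integral_sq_slice_le_of_pd2 (hh : ContDiff ℝ 1 h) {y₀ : ℝ} (hy₀ : y₀ ∈ Icc 0 π) :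
    ∫ x in Icc (-π) π, h (x, y₀) ^ 2 ≤ π⁻¹ * nL2sq h + ∫ p in Qdom, |2 * h p * pd2 h p| := by
  have h2 := continuous_pd2 hh
  have hA : Continuous fun x => ∫ y in Icc 0 π, h (x, y) ^ 2 :=
    continuous_parametric_integral_of_continuous (by fun_prop) isCompact_Icc
  have hB : Continuous fun x => ∫ y in Icc 0 π, |2 * h (x, y) * pd2 h (x, y)| :=
    continuous_parametric_integral_of_continuous (by fun_prop) isCompact_Icc
  have hslice : ∀ x ∈ Icc (-π) π, h (x, y₀) ^ 2 ≤ π⁻¹ * (∫ y in Icc 0 π, h (x, y) ^ 2)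
      + ∫ y in Icc 0 π, |2 * h (x, y) * pd2 h (x, y)| := fun x _ => by
    simpa using sq_le_inv_mul_integral_sq_add
      (fun y => hasDerivAt_pd2 (hh.differentiable one_ne_zero (x, y))) (h2.comp (by fun_prop))
      pi_pos hy₀
  refine (setIntegral_mono_on ?_ ((hA.const_mul _).fun_add hB).integrableOn_Icc measurableSet_Icc
    hslice).trans_eq ?_
  · exact (by fun_prop : Continuous fun x => h (x, y₀) ^ 2).integrableOn_Icc
  rw [integral_add ((hA.const_mul _).integrableOn_Icc) hB.integrableOn_Icc, integral_const_mul,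
    nL2sq, integral_Qdom_eq_integral_integral (by fun_prop),
    integral_Qdom_eq_integral_integral (by fun_prop)]

lemma integral_sq_slice_le_of_pd1 (hh : ContDiff ℝ 1 h) {x₀ : ℝ} (hx₀ : x₀ ∈ Icc (-π) π) :
    ∫ y in Icc 0 π, h (x₀, y) ^ 2 ≤ (2 * π)⁻¹ * nL2sq h + ∫ p in Qdom, |2 * h p * pd1 h p| := by
  have h1 := continuous_pd1 hh
  have hA : Continuous fun y => ∫ x in Icc (-π) π, h (x, y) ^ 2 :=
    continuous_parametric_integral_of_continuous (f := fun y x => h (x, y) ^ 2) (by fun_prop)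
      isCompact_Icc
  have hB : Continuous fun y => ∫ x in Icc (-π) π, |2 * h (x, y) * pd1 h (x, y)| :=
    continuous_parametric_integral_of_continuous
      (f := fun y x => |2 * h (x, y) * pd1 h (x, y)|) (by fun_prop) isCompact_Icc
  have hslice : ∀ y ∈ Icc 0 π, h (x₀, y) ^ 2 ≤ (2 * π)⁻¹ * (∫ x in Icc (-π) π, h (x, y) ^ 2)
      + ∫ x in Icc (-π) π, |2 * h (x, y) * pd1 h (x, y)| := fun y _ => by
    have hy := sq_le_inv_mul_integral_sq_add
      (fun x => hasDerivAt_pd1 (hh.differentiable one_ne_zero (x, y))) (h1.comp (by fun_prop))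
      (by linarith [pi_pos]) hx₀
    rwa [show π - -π = 2 * π by ring] at hy
  refine (setIntegral_mono_on ?_ ((hA.const_mul _).fun_add hB).integrableOn_Icc measurableSet_Icc
    hslice).trans_eq ?_
  · exact (by fun_prop : Continuous fun y => h (x₀, y) ^ 2).integrableOn_Icc
  rw [integral_add ((hA.const_mul _).integrableOn_Icc) hB.integrableOn_Icc, integral_const_mul,
    nL2sq, integral_Qdom_eq_integral_integral_swap (by fun_prop),
    integral_Qdom_eq_integral_integral_swap (by fun_prop)]

lemma abs_sub_le_of_slice_bounds (hc : ContDiff ℝ 1 c) {R : ℝ}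
    (h1 : ∀ y ∈ Icc 0 π, ∫ x in Icc (-π) π, pd1 c (x, y) ^ 2 ≤ R)
    (h2 : ∀ x ∈ Icc (-π) π, ∫ y in Icc 0 π, pd2 c (x, y) ^ 2 ≤ R)
    {p q : ℝ × ℝ} (hp : p ∈ Qbar) (hq : q ∈ Qbar) :
    |c p - c q| ≤ (√(2 * π) + √π) * √R := by
  obtain ⟨p₁, p₂⟩ := p
  obtain ⟨q₁, q₂⟩ := q
  obtain ⟨hp₁, hp₂⟩ := hp
  obtain ⟨hq₁, hq₂⟩ := hq
  have hd := hc.differentiable one_ne_zero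
  have hhor : |c (p₁, p₂) - c (q₁, p₂)| ≤ √(2 * π) * √R := by
    refine (abs_sub_le_sqrt_mul_sqrt_of_hasDerivAt (fun x => hasDerivAt_pd1 (hd (x, p₂)))
      ((continuous_pd1 hc).comp (by fun_prop)) hq₁ hp₁).trans ?_
    rw [show π - -π = 2 * π by ring]
    gcongr
    exact h1 p₂ hp₂
  have hver : |c (q₁, p₂) - c (q₁, q₂)| ≤ √π * √R := by
    refine (abs_sub_le_sqrt_mul_sqrt_of_hasDerivAt (fun y => hasDerivAt_pd2 (hd (q₁, y)))
      ((continuous_pd2 hc).comp (by fun_prop)) hq₂ hp₂).trans ?_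
    rw [sub_zero]
    gcongr
    exact h2 q₁ hq₁
  calc |c (p₁, p₂) - c (q₁, q₂)|
      ≤ |c (p₁, p₂) - c (q₁, p₂)| + |c (q₁, p₂) - c (q₁, q₂)| := abs_sub_le _ _ _
    _ ≤ (√(2 * π) + √π) * √R := by linarith

lemma abs_le_of_integral_eq_zero (hc : IntegrableOn c Qdom) (hmean : ∫ p in Qdom, c p = 0)
    {K : ℝ} (hosc : ∀ p ∈ Qbar, ∀ q ∈ Qbar, |c p - c q| ≤ K) {p : ℝ × ℝ} (hp : p ∈ Qbar) :
    |c p| ≤ K := by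
  have hconst : IntegrableOn (fun _ => (1 : ℝ)) Qdom := integrableOn_const volume_Qdom_lt_top.ne
  have hlow := setIntegral_mono_on (hconst.const_mul (c p - K)) hc measurableSet_Qdom
    fun q hq => by linarith [abs_le.1 (hosc p hp q (Qdom_subset_Qbar hq))]
  have hup := setIntegral_mono_on hc (hconst.const_mul (c p + K)) measurableSet_Qdom
    fun q hq => by linarith [abs_le.1 (hosc p hp q (Qdom_subset_Qbar hq))]
  simp only [mul_one, setIntegral_Qdom_const, hmean] at hlow hup
  have hvol : 0 < 2 * π ^ 2 := by positivity
  rw [abs_le]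
  constructor <;> nlinarith

end SupNorm

section NeumannProblem

variable {c h : ℝ × ℝ → ℝ}

lemma gradL2sq_eq_integral_mul (hc : ContDiff ℝ 2 c) (hcp : Periodic2 c)
    (hlap : ∀ p ∈ Strip, -lap2 c p = h p) (hbc : ∀ x, pd2 c (x, 0) = 0 ∧ pd2 c (x, π) = 0) :
    gradL2sq c = ∫ p in Qdom, h p * c p := by
  have hc1 : ContDiff ℝ 1 c := hc.of_le (by norm_num)
  have hc11 := contDiff_pd1 (n := 1) hc
  have hc22 := contDiff_pd2 (n := 1) hc
  have h1 := integral_mul_pd1_eq_neg hc1 hc11 hcp hcp.pd1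
  have h2 := integral_mul_pd2_eq_neg hc1 hc22 (fun x => by simp [(hbc x).1, (hbc x).2])
  have hsum : ∫ p in Qdom, h p * c p
      = -((∫ p in Qdom, c p * pd1 (pd1 c) p) + ∫ p in Qdom, c p * pd2 (pd2 c) p) := by
    rw [← integral_add (integrableOn_Qdom (hc1.continuous.fun_mul (continuous_pd1 hc11)))
      (integrableOn_Qdom (hc1.continuous.fun_mul (continuous_pd2 hc22))), ← integral_neg]
    refine setIntegral_congr_fun measurableSet_Qdom fun p hp => ?_
    rw [← hlap p (Qdom_subset_Strip hp), lap2]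
    ring
  rw [gradL2sq, integral_add (integrableOn_Qdom ((continuous_pd1 hc1).fun_pow 2))
    (integrableOn_Qdom ((continuous_pd2 hc1).fun_pow 2)), hsum, h1, h2]
  simp only [sq]
  ring

lemma integral_pd1_pd2_sq_le (hc : ContDiff ℝ 3 c) (hcp : Periodic2 c)
    (hlap : ∀ p ∈ Strip, -lap2 c p = h p) (hbc : ∀ x, pd2 c (x, 0) = 0 ∧ pd2 c (x, π) = 0) :
    ∫ p in Qdom, pd1 (pd2 c) p ^ 2 ≤ nL2sq h / 4 := by
  have hc1 : ContDiff ℝ 2 (pd1 c) := contDiff_pd1 hc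
  have hc2 : ContDiff ℝ 2 (pd2 c) := contDiff_pd2 hc
  have hc11 : ContDiff ℝ 1 (pd1 (pd1 c)) := contDiff_pd1 hc1
  have hc21 : ContDiff ℝ 1 (pd2 (pd1 c)) := contDiff_pd2 hc1
  -- `∫ ∂₁₁c ∂₂₂c = ∫ (∂₁₂c)²`: move `∂₂` from `∂₂c` onto `∂₁₁c`, commute it with `∂₁`,
  -- and move that `∂₁` back onto `∂₂c`.
  have hparts2 := integral_mul_pd2_eq_neg hc11 (hc2.of_le (by norm_num))
    (fun x => by simp [(hbc x).1, (hbc x).2])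
  have hparts1 := integral_mul_pd1_eq_neg hc21 (hc2.of_le (by norm_num))
    hcp.pd1.pd2 hcp.pd2
  rw [← pd1_pd2_comm (hc1.of_le (by norm_num))] at hparts2
  have hsymm : ∫ p in Qdom, pd2 (pd1 c) p * pd1 (pd2 c) p = ∫ p in Qdom, pd1 (pd2 c) p ^ 2 := by
    rw [← pd1_pd2_comm (hc.of_le (by norm_num))]
    simp only [sq]
  have hD : nL2sq h = ∫ p in Qdom, (pd1 (pd1 c) p + pd2 (pd2 c) p) ^ 2 :=
    setIntegral_congr_fun measurableSet_Qdom fun p hp => by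
      rw [← hlap p (Qdom_subset_Strip hp), lap2, neg_sq]
  have h11 := continuous_pd1 (hc1.of_le (by norm_num))
  have h22 := continuous_pd2 (hc2.of_le (by norm_num))
  have hmono : ∫ p in Qdom, 4 * (pd1 (pd1 c) p * pd2 (pd2 c) p) ≤ nL2sq h := by
    rw [hD]
    refine setIntegral_mono (integrableOn_Qdom (by fun_prop)) (integrableOn_Qdom (by fun_prop))
      fun p => ?_
    nlinarith [sq_nonneg (pd1 (pd1 c) p - pd2 (pd2 c) p)]
  rw [integral_const_mul] at hmono
  linarith

lemma nL2sq_pd1_le_gradL2sq (hc : ContDiff ℝ 1 c) : nL2sq (pd1 c) ≤ gradL2sq c :=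
  setIntegral_mono (integrableOn_Qdom ((continuous_pd1 hc).fun_pow 2))
    (integrableOn_Qdom (((continuous_pd1 hc).fun_pow 2).fun_add ((continuous_pd2 hc).fun_pow 2)))
    fun _ => le_add_of_nonneg_right (sq_nonneg _)

lemma nL2sq_pd2_le_gradL2sq (hc : ContDiff ℝ 1 c) : nL2sq (pd2 c) ≤ gradL2sq c :=
  setIntegral_mono (integrableOn_Qdom ((continuous_pd2 hc).fun_pow 2))
    (integrableOn_Qdom (((continuous_pd1 hc).fun_pow 2).fun_add ((continuous_pd2 hc).fun_pow 2)))
    fun _ => le_add_of_nonneg_left (sq_nonneg _)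

lemma integral_abs_two_mul_mul_pd1_pd2_le (hc : ContDiff ℝ 3 c) (hcp : Periodic2 c)
    (hlap : ∀ p ∈ Strip, -lap2 c p = h p) (hbc : ∀ x, pd2 c (x, 0) = 0 ∧ pd2 c (x, π) = 0)
    {k : ℝ × ℝ → ℝ} (hk : Continuous k) (hkc : ∫ p in Qdom, k p ^ 2 ≤ gradL2sq c) :
    ∫ p in Qdom, |2 * k p * pd1 (pd2 c) p| ≤ gradL2 c * nL2 h := by
  have hCS := integral_abs_mul_le_sqrt_mul_sqrt (memLp_two_Qdom hk)
    (memLp_two_Qdom (continuous_pd1 (contDiff_pd2 (n := 1) (hc.of_le (by norm_num)))))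
  have hmix := integral_pd1_pd2_sq_le hc hcp hlap hbc
  have hhalf : √(nL2sq h / 4) = nL2 h / 2 := by
    rw [Real.sqrt_div' _ (by norm_num), show (4 : ℝ) = 2 ^ 2 by norm_num,
      Real.sqrt_sq (by norm_num), nL2]
  calc ∫ p in Qdom, |2 * k p * pd1 (pd2 c) p|
      = 2 * ∫ p in Qdom, |k p * pd1 (pd2 c) p| := by
        rw [← integral_const_mul]
        simp only [mul_assoc, abs_mul, abs_two]
    _ ≤ 2 * (√(gradL2sq c) * √(nL2sq h / 4)) := by gcongr 2 * ?_; exact hCS.trans (by gcongr)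
    _ = gradL2 c * nL2 h := by rw [hhalf, gradL2]; ring

lemma integral_sq_pd1_slice_le (hc : ContDiff ℝ 3 c) (hcp : Periodic2 c)
    (hlap : ∀ p ∈ Strip, -lap2 c p = h p) (hbc : ∀ x, pd2 c (x, 0) = 0 ∧ pd2 c (x, π) = 0)
    {y : ℝ} (hy : y ∈ Icc 0 π) :
    ∫ x in Icc (-π) π, pd1 c (x, y) ^ 2 ≤ π⁻¹ * gradL2sq c + gradL2 c * nL2 h := by
  have hc1 : ContDiff ℝ 2 (pd1 c) := contDiff_pd1 hc
  have hG := nL2sq_pd1_le_gradL2sq (hc.of_le (by norm_num))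
  have hmixed := integral_abs_two_mul_mul_pd1_pd2_le hc hcp hlap hbc hc1.continuous hG
  rw [pd1_pd2_comm (hc.of_le (by norm_num))] at hmixed
  have hslice := integral_sq_slice_le_of_pd2 (hc1.of_le (by norm_num)) hy
  have hscale : π⁻¹ * nL2sq (pd1 c) ≤ π⁻¹ * gradL2sq c := by gcongr
  linarith

lemma integral_sq_pd2_slice_le (hc : ContDiff ℝ 3 c) (hcp : Periodic2 c)
    (hlap : ∀ p ∈ Strip, -lap2 c p = h p) (hbc : ∀ x, pd2 c (x, 0) = 0 ∧ pd2 c (x, π) = 0)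
    {x : ℝ} (hx : x ∈ Icc (-π) π) :
    ∫ y in Icc 0 π, pd2 c (x, y) ^ 2 ≤ π⁻¹ * gradL2sq c + gradL2 c * nL2 h := by
  have hc2 : ContDiff ℝ 2 (pd2 c) := contDiff_pd2 hc
  have hG := nL2sq_pd2_le_gradL2sq (hc.of_le (by norm_num))
  have hmixed := integral_abs_two_mul_mul_pd1_pd2_le hc hcp hlap hbc hc2.continuous hG
  have hslice := integral_sq_slice_le_of_pd1 (hc2.of_le (by norm_num)) hx
  have hscale : (2 * π)⁻¹ * nL2sq (pd2 c) ≤ π⁻¹ * gradL2sq c := by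
    have := nL2sq_nonneg (pd2 c)
    gcongr
    linarith [pi_pos]
  linarith

lemma abs_le_of_isInvNeumann (hc : IsInvNeumann c h) {p : ℝ × ℝ} (hp : p ∈ Qbar) :
    |c p| ≤ (√(2 * π) + √π) * √(π⁻¹ * gradL2sq c + gradL2 c * nL2 h) := by
  obtain ⟨hcC, hcp, hlap, hbc, hmean⟩ := hc
  have hc3 : ContDiff ℝ 3 c := hcC.of_le (by norm_cast)
  refine abs_le_of_integral_eq_zero (integrableOn_Qdom hcC.continuous) ?_
    (fun p hp q hq => abs_sub_le_of_slice_bounds (hc3.of_le (by norm_num))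
      (fun y hy => integral_sq_pd1_slice_le hc3 hcp hlap hbc hy)
      (fun x hx => integral_sq_pd2_slice_le hc3 hcp hlap hbc hx) hp hq) hp
  rw [integral_Qdom_eq_mul_meanQ, hmean, mul_zero]

end NeumannProblem

section Estimate

variable {f c h : ℝ × ℝ → ℝ}

lemma integral_mul_le_nL1_mul (hh : Continuous h) (hc : Continuous c) {K : ℝ}
    (hK : ∀ p ∈ Qdom, |c p| ≤ K) : ∫ p in Qdom, h p * c p ≤ nL1 h * K := by
  rw [nL1, ← integral_mul_const]
  refine setIntegral_mono_on (integrableOn_Qdom (hh.fun_mul hc))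
    (integrableOn_Qdom (hh.abs.mul continuous_const)) measurableSet_Qdom fun p hp => ?_
  calc h p * c p ≤ |h p| * |c p| := by rw [← abs_mul]; exact le_abs_self _
    _ ≤ |h p| * K := by gcongr; exact hK p hp

lemma gradL2sq_le_of_isInvNeumann (hf : Continuous f) (hf0 : ∀ p ∈ Qdom, 0 ≤ f p)
    (hc : IsInvNeumann c (fun p => f p - meanQ f)) :
    gradL2sq c ≤ 4 * π ^ 2 * meanQ f * ((√(2 * π) + √π) *
      √(π⁻¹ * gradL2sq c + gradL2 c * nL2 (fun p => f p - meanQ f))) := by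
  calc gradL2sq c = ∫ p in Qdom, (f p - meanQ f) * c p :=
        gradL2sq_eq_integral_mul (hc.1.of_le (by norm_cast)) hc.2.1 hc.2.2.1 hc.2.2.2.1
    _ ≤ nL1 (fun p => f p - meanQ f) * ((√(2 * π) + √π) *
          √(π⁻¹ * gradL2sq c + gradL2 c * nL2 (fun p => f p - meanQ f))) :=
        integral_mul_le_nL1_mul (by fun_prop) hc.1.continuous
          fun p hp => abs_le_of_isInvNeumann hc (Qdom_subset_Qbar hp)
    _ ≤ _ := by gcongr; exact nL1_sub_meanQ_le (integrableOn_Qdom hf) hf0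

lemma pow_three_le_of_sq_le {G g e m : ℝ} (hg : 0 ≤ g) (he : 0 ≤ e) (hG : g ^ 2 = G)
    (hm : m ^ 2 ≤ e ^ 2) (h : G ^ 2 ≤ 9600 * m ^ 2 * G + 30000 * m ^ 2 * (g * e)) :
    G ^ 3 ≤ 8 * 10 ^ 12 * m ^ 4 * e ^ 2 := by
  subst hG
  have hm4 : 0 ≤ m ^ 4 * e ^ 2 := by positivity
  by_cases hcase : g ^ 3 ≤ 60000 * m ^ 2 * e
  · calc (g ^ 2) ^ 3 = (g ^ 3) ^ 2 := by ring
      _ ≤ (60000 * m ^ 2 * e) ^ 2 := pow_le_pow_left₀ (by positivity) hcase 2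
      _ ≤ 8 * 10 ^ 12 * m ^ 4 * e ^ 2 := by nlinarith
  · push Not at hcase
    have hgpos : 0 < g := by
      rcases hg.eq_or_lt with rfl | hlt
      · nlinarith [sq_nonneg m]
      · exact hlt
    have hsmall : 30000 * m ^ 2 * (g * e) ≤ (g ^ 2) ^ 2 / 2 := by nlinarith
    have hg2 : g ^ 2 ≤ 19200 * m ^ 2 := by nlinarith
    calc (g ^ 2) ^ 3 ≤ (19200 * m ^ 2) ^ 3 := pow_le_pow_left₀ (sq_nonneg g) hg2 3
      _ = 19200 ^ 3 * (m ^ 4 * m ^ 2) := by ring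
      _ ≤ 19200 ^ 3 * (m ^ 4 * e ^ 2) := by gcongr
      _ ≤ 8 * 10 ^ 12 * m ^ 4 * e ^ 2 := by nlinarith

lemma gradL2sq_sq_le (hf : Continuous f) (hf0 : ∀ p ∈ Qdom, 0 ≤ f p)
    (hc : IsInvNeumann c (fun p => f p - meanQ f)) :
    gradL2sq c ^ 2 ≤ 9600 * meanQ f ^ 2 * gradL2sq c
      + 30000 * meanQ f ^ 2 * (gradL2 c * nL2 (fun p => f p - meanQ f)) := by
  have hbound := gradL2sq_le_of_isInvNeumann hf hf0 hc
  set G := gradL2sq c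
  set m := meanQ f
  set ge := gradL2 c * nL2 (fun p => f p - meanQ f)
  have hge : 0 ≤ ge := mul_nonneg (sqrt_nonneg _) (sqrt_nonneg _)
  have hR : 0 ≤ π⁻¹ * G + ge :=
    add_nonneg (mul_nonneg (inv_nonneg.2 pi_pos.le) (gradL2sq_nonneg c)) hge
  have hK : (√(2 * π) + √π) ^ 2 ≤ 6 * π := by
    nlinarith [sq_sqrt (by positivity : 0 ≤ 2 * π), sq_sqrt pi_pos.le,
      sq_nonneg (√(2 * π) - √π)]
  have hπ := pi_pos
  have hπ4 : π ^ 4 ≤ 100 := by nlinarith [pi_lt_d2, pow_le_pow_left₀ hπ.le pi_lt_d2.le 4]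
  have hπ5 : π ^ 5 ≤ 312 := by nlinarith [pi_lt_d2, pow_le_pow_left₀ hπ.le pi_lt_d2.le 5]
  calc G ^ 2 ≤ (4 * π ^ 2 * m * ((√(2 * π) + √π) * √(π⁻¹ * G + ge))) ^ 2 :=
        pow_le_pow_left₀ (gradL2sq_nonneg c) hbound 2
    _ = 16 * π ^ 4 * m ^ 2 * (√(2 * π) + √π) ^ 2 * √(π⁻¹ * G + ge) ^ 2 := by ring
    _ = 16 * π ^ 4 * m ^ 2 * (√(2 * π) + √π) ^ 2 * (π⁻¹ * G + ge) := by rw [sq_sqrt hR]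
    _ ≤ 16 * π ^ 4 * m ^ 2 * (6 * π) * (π⁻¹ * G + ge) := by gcongr
    _ = 96 * π ^ 4 * m ^ 2 * G + 96 * π ^ 5 * m ^ 2 * ge := by
        field_simp
        ring
    _ ≤ 9600 * m ^ 2 * G + 30000 * m ^ 2 * ge := by
        have : 0 ≤ G := gradL2sq_nonneg c
        gcongr ?_ * _ * _ + ?_ * _ * _ <;> nlinarith

lemma integral_mul_pd2_pow_six_le (hf : Continuous f) (hf0 : ∀ p ∈ Qdom, 0 ≤ f p)
    (hc : IsInvNeumann c (fun p => f p - meanQ f))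
    (hm : meanQ f ^ 2 ≤ nL2sq (fun p => f p - meanQ f)) :
    (∫ p in Qdom, f p * pd2 c p) ^ 6 ≤
      10 ^ 17 * meanQ f ^ 4 * nL2sq (fun p => f p - meanQ f) ^ 4 := by
  set D := nL2sq (fun p => f p - meanQ f)
  set G := gradL2sq c
  have hD : 0 ≤ D := nL2sq_nonneg _
  have hG : 0 ≤ G := gradL2sq_nonneg c
  have he : nL2 (fun p => f p - meanQ f) ^ 2 = D := sq_sqrt hD
  have hG3 : G ^ 3 ≤ 8 * 10 ^ 12 * meanQ f ^ 4 * D := by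
    have h := pow_three_le_of_sq_le (g := gradL2 c) (e := nL2 (fun p => f p - meanQ f))
      (sqrt_nonneg _) (sqrt_nonneg _) (sq_sqrt hG) (he ▸ hm)
      (gradL2sq_sq_le hf hf0 hc)
    rwa [he] at h
  have hπ2 : π ^ 2 ≤ 10 := by nlinarith [pi_lt_d2, pi_pos]
  have hF : (∫ p in Qdom, f p * pd2 c p) ^ 2 ≤ 21 * D * G := by
    calc (∫ p in Qdom, f p * pd2 c p) ^ 2 ≤ nL2sq f * nL2sq (pd2 c) :=
          sq_integral_mul_le hf (continuous_pd2 (hc.1.of_le (by norm_cast)))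
      _ ≤ (D + 2 * π ^ 2 * meanQ f ^ 2) * G := by
          rw [← nL2sq_eq_nL2sq_sub_meanQ_add hf]
          gcongr
          · exact nL2sq_nonneg f
          · exact nL2sq_pd2_le_gradL2sq (hc.1.of_le (by norm_cast))
      _ ≤ 21 * D * G := by gcongr; nlinarith
  calc (∫ p in Qdom, f p * pd2 c p) ^ 6 = ((∫ p in Qdom, f p * pd2 c p) ^ 2) ^ 3 := by ring
    _ ≤ (21 * D * G) ^ 3 := pow_le_pow_left₀ (sq_nonneg _) hF 3
    _ = 9261 * D ^ 3 * G ^ 3 := by ring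
    _ ≤ 9261 * D ^ 3 * (8 * 10 ^ 12 * meanQ f ^ 4 * D) := by gcongr
    _ ≤ 10 ^ 17 * meanQ f ^ 4 * D ^ 4 := by
        nlinarith [pow_nonneg hD 4, pow_nonneg (sq_nonneg (meanQ f)) 2]

end Estimate

section ParametricIntegrals

variable {F : ℝ → ℝ × ℝ → ℝ}

lemma continuousOn_integral_Qdom {I : Set ℝ} (hI : IsCompact I)
    (hF : ContinuousOn (Function.uncurry F) (I ×ˢ Qbar)) :
    ContinuousOn (fun t => ∫ p in Qdom, F t p) I := by
  obtain ⟨M, hM⟩ := (hI.prod isCompact_Qbar).exists_bound_of_continuousOn hF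
  have hslice : ∀ t ∈ I, ContinuousOn (F t) Qbar := fun t ht =>
    hF.comp (Continuous.prodMk_right t).continuousOn fun p hp => ⟨ht, hp⟩
  refine continuousOn_of_dominated (bound := fun _ => M)
    (fun t ht => ((hslice t ht).mono Qdom_subset_Qbar).aestronglyMeasurable measurableSet_Qdom)
    (fun t ht => ae_restrict_of_forall_mem measurableSet_Qdom fun p hp =>
      hM (t, p) ⟨ht, Qdom_subset_Qbar hp⟩)
    (integrableOn_const volume_Qdom_lt_top.ne)
    (ae_restrict_of_forall_mem measurableSet_Qdom fun p hp =>
      hF.comp (Continuous.prodMk_left p).continuousOn fun t ht => ⟨ht, Qdom_subset_Qbar hp⟩)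

lemma hasDerivAt_integral_Qdom {U : Set ℝ} (hU : IsOpen U)
    (hF : ContDiffOn ℝ 1 (Function.uncurry F) (U ×ˢ univ)) {t₀ : ℝ} (ht₀ : t₀ ∈ U) :
    HasDerivAt (fun t => ∫ p in Qdom, F t p) (∫ p in Qdom, deriv (fun t => F t p) t₀) t₀ := by
  set F' : ℝ → ℝ × ℝ → ℝ := fun t p => fderiv ℝ (Function.uncurry F) (t, p) (1, 0)
  have hopen : IsOpen (U ×ˢ (univ : Set (ℝ × ℝ))) := hU.prod isOpen_univ
  have hderiv : ∀ t ∈ U, ∀ p, HasDerivAt (fun s => F s p) (F' t p) t := fun t ht p =>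
    ((hF.differentiableOn one_ne_zero).differentiableAt
      (hopen.mem_nhds ⟨ht, trivial⟩)).hasFDerivAt.comp_hasDerivAt t
      ((hasDerivAt_id t).prodMk (hasDerivAt_const t p))
  have hF'cont : ContinuousOn (Function.uncurry F') (U ×ˢ univ) :=
    ((hF.continuousOn_fderiv_of_isOpen hopen le_rfl).clm_apply continuousOn_const).congr
      fun _ _ => rfl
  have hcont : ∀ t ∈ U, Continuous (F t) := fun t ht =>
    hF.continuousOn.comp_continuous (Continuous.prodMk_right t) fun _ => ⟨ht, trivial⟩
  obtain ⟨ε, hε, hball⟩ := Metric.nhds_basis_closedBall.mem_iff.1 (hU.mem_nhds ht₀)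
  obtain ⟨M, hM⟩ := ((isCompact_closedBall t₀ ε).prod isCompact_Qbar).exists_bound_of_continuousOn
    (hF'cont.mono (prod_mono hball (subset_univ _)))
  have h := hasDerivAt_integral_of_dominated_loc_of_deriv_le (μ := volume.restrict Qdom)
    (F' := F') (bound := fun _ => M) (Metric.closedBall_mem_nhds t₀ hε)
    (eventually_of_mem (hU.mem_nhds ht₀) fun t ht => (hcont t ht).aestronglyMeasurable)
    (integrableOn_Qdom (hcont t₀ ht₀))
    ((hF'cont.comp_continuous (Continuous.prodMk_right t₀) fun _ => ⟨ht₀, trivial⟩)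
      |>.aestronglyMeasurable)
    (ae_restrict_of_forall_mem measurableSet_Qdom fun p hp t ht =>
      hM (t, p) ⟨ht, Qdom_subset_Qbar hp⟩)
    (integrableOn_const volume_Qdom_lt_top.ne)
    (ae_of_all _ fun p t ht => hderiv t (hball ht) p)
  simpa only [fun p => (hderiv t₀ ht₀ p).deriv] using h.2

end ParametricIntegrals

section DivergenceForm

variable {f c ψ : ℝ × ℝ → ℝ}

lemma integral_lap2_eq_zero (hf : ContDiff ℝ 2 f) (hfp : Periodic2 f)
    (hbc : ∀ x, pd2 f (x, 0) = 0 ∧ pd2 f (x, π) = 0) : ∫ p in Qdom, lap2 f p = 0 := by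
  have h1 : ContDiff ℝ 1 (pd1 f) := contDiff_pd1 hf
  have h2 : ContDiff ℝ 1 (pd2 f) := contDiff_pd2 hf
  rw [show (fun p => lap2 f p) = fun p => pd1 (pd1 f) p + pd2 (pd2 f) p from rfl,
    integral_add (integrableOn_Qdom (continuous_pd1 h1)) (integrableOn_Qdom (continuous_pd2 h2)),
    integral_pd1_eq_zero h1 hfp.pd1,
    integral_pd2_eq_zero h2 fun x => by rw [(hbc x).1, (hbc x).2], add_zero]

lemma integral_pd2_mul_pd1_sub_eq_zero (hψ : ContDiff ℝ 2 ψ) (hψp : Periodic2 ψ)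
    (hψb : ∀ x, ψ (x, 0) = 0 ∧ ψ (x, π) = 0) (hf : ContDiff ℝ 1 f) (hfp : Periodic2 f) :
    ∫ p in Qdom, (pd2 ψ p * pd1 f p - pd1 ψ p * pd2 f p) = 0 := by
  have hψ1 : ContDiff ℝ 1 (pd1 ψ) := contDiff_pd1 hψ
  have hψ2 : ContDiff ℝ 1 (pd2 ψ) := contDiff_pd2 hψ
  have hd := hψ.differentiable two_ne_zero
  have hbdry : ∀ x, pd1 ψ (x, π) * f (x, π) = pd1 ψ (x, 0) * f (x, 0) := fun x => by
    rw [pd1_eq_zero_of_forall_eq_zero hd (fun u => (hψb u).1),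
      pd1_eq_zero_of_forall_eq_zero hd (fun u => (hψb u).2), zero_mul, zero_mul]
  rw [integral_sub (integrableOn_Qdom ((continuous_pd2 (hψ.of_le (by norm_num))).fun_mul
      (continuous_pd1 hf))) (integrableOn_Qdom ((continuous_pd1 (hψ.of_le (by norm_num))).fun_mul
      (continuous_pd2 hf))),
    integral_mul_pd1_eq_neg hψ2 hf hψp.pd2 hfp, integral_mul_pd2_eq_neg hψ1 hf hbdry,
    pd1_pd2_comm hψ, sub_self]

lemma integral_pd1_mul_add_pd2_mul_eq_zero (hf : ContDiff ℝ 1 f) (hfp : Periodic2 f)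
    (hc : ContDiff ℝ 2 c) (hcp : Periodic2 c) (hbc : ∀ x, pd2 c (x, 0) = 0 ∧ pd2 c (x, π) = 0) :
    ∫ p in Qdom, (pd1 (fun q => f q * pd1 c q) p + pd2 (fun q => f q * pd2 c q) p) = 0 := by
  have h1 : ContDiff ℝ 1 fun q => f q * pd1 c q := hf.mul (contDiff_pd1 hc)
  have h2 : ContDiff ℝ 1 fun q => f q * pd2 c q := hf.mul (contDiff_pd2 hc)
  rw [integral_add (integrableOn_Qdom (continuous_pd1 h1)) (integrableOn_Qdom (continuous_pd2 h2)),
    integral_pd1_eq_zero h1 (hfp.mul hcp.pd1),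
    integral_pd2_eq_zero h2 fun x => by simp only [(hbc x).1, (hbc x).2, mul_zero], add_zero]

end DivergenceForm

section MassConservation

variable {g T : ℝ} {ρ c ψ : ℝ → ℝ × ℝ → ℝ}

lemma IsRegSol.integral_deriv_eq_zero (hsol : IsRegSol g (Ico 0 T) ρ c ψ) {t : ℝ}
    (ht : t ∈ Ioo 0 T) : ∫ p in Qdom, deriv (fun s => ρ s p) t = 0 := by
  have htI : t ∈ Ico 0 T ∩ Ioi 0 := ⟨⟨ht.1.le, ht.2⟩, ht.1⟩
  obtain ⟨hcC, hcp, -, hcb, -⟩ := hsol.chem t htI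
  obtain ⟨hψC, hψp, -, hψb⟩ := hsol.stream t htI
  have hρC := hsol.smooth_space t htI
  have hρp := hsol.periodic t htI.1
  have hlap := integral_lap2_eq_zero (hρC.of_le (by norm_cast)) hρp (hsol.bc t htI)
  have htransport := integral_pd2_mul_pd1_sub_eq_zero (hψC.of_le (by norm_cast)) hψp hψb
    (hρC.of_le (by norm_cast)) hρp
  have hflux := integral_pd1_mul_add_pd2_mul_eq_zero (hρC.of_le (by norm_cast)) hρp
    (hcC.of_le (by norm_cast)) hcp hcb
  have hpde : ∀ p ∈ Qdom, deriv (fun s => ρ s p) t = (lap2 (ρ t) p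
      + g * (pd2 (ψ t) p * pd1 (ρ t) p - pd1 (ψ t) p * pd2 (ρ t) p))
      - (pd1 (fun q => ρ t q * pd1 (c t) q) p + pd2 (fun q => ρ t q * pd2 (c t) q) p) :=
    fun p hp => by linarith [hsol.pde t htI p (Qdom_subset_Strip hp)]
  have hA : Continuous fun p => lap2 (ρ t) p := hρC.pd1.pd1.continuous.add hρC.pd2.pd2.continuous
  have hB : Continuous fun p => pd2 (ψ t) p * pd1 (ρ t) p - pd1 (ψ t) p * pd2 (ρ t) p :=
    (hψC.pd2.continuous.fun_mul hρC.pd1.continuous).fun_sub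
      (hψC.pd1.continuous.fun_mul hρC.pd2.continuous)
  have hC : Continuous fun p =>
      pd1 (fun q => ρ t q * pd1 (c t) q) p + pd2 (fun q => ρ t q * pd2 (c t) q) p :=
    (hρC.mul hcC.pd1).pd1.continuous.fun_add (hρC.mul hcC.pd2).pd2.continuous
  rw [setIntegral_congr_fun measurableSet_Qdom hpde,
    integral_sub (integrableOn_Qdom (hA.fun_add (continuous_const.fun_mul hB)))
      (integrableOn_Qdom hC),
    integral_add (integrableOn_Qdom hA) (integrableOn_Qdom (continuous_const.fun_mul hB)),
    integral_const_mul, hlap, htransport, hflux]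
  ring

lemma IsRegSol.meanQ_eq (hsol : IsRegSol g (Ico 0 T) ρ c ψ) {t : ℝ} (ht : t ∈ Ico 0 T) :
    meanQ (ρ t) = meanQ (ρ 0) := by
  rcases ht.1.eq_or_lt with rfl | ht0
  · rfl
  have hcont : ContinuousOn (fun s => ∫ p in Qdom, ρ s p) (Icc 0 t) :=
    continuousOn_integral_Qdom isCompact_Icc
      (hsol.cont.mono (prod_mono (Icc_subset_Ico_right ht.2) Qbar_subset_Strip))
  have hsmooth : ContDiffOn ℝ 1 (Function.uncurry ρ) (Ioo 0 T ×ˢ univ) :=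
    (hsol.smooth.of_le (by norm_cast)).mono
      (prod_mono (fun s hs => ⟨⟨hs.1.le, hs.2⟩, hs.1⟩) subset_rfl)
  have hderiv : ∀ s ∈ Ioo 0 t, HasDerivAt (fun s => ∫ p in Qdom, ρ s p) 0 s := fun s hs => by
    have hsT : s ∈ Ioo 0 T := ⟨hs.1, hs.2.trans ht.2⟩
    simpa only [hsol.integral_deriv_eq_zero hsT] using
      hasDerivAt_integral_Qdom isOpen_Ioo hsmooth hsT
  obtain ⟨s, -, hs⟩ := exists_hasDerivAt_eq_slope _ _ ht0 hcont hderiv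
  rw [eq_div_iff (by linarith), zero_mul, eq_comm, sub_eq_zero] at hs
  rw [meanQ, meanQ, hs]

end MassConservation

lemma lt_two_pow_div_two_of_ceil_lt {x : ℝ} {N : ℕ} (hN : ⌈x⌉₊ + 1 ≤ N) : x < 2 ^ N / 2 := by
  have hpow : (2 : ℝ) ^ (⌈x⌉₊ + 1) ≤ 2 ^ N := pow_le_pow_right₀ (by norm_num) hN
  have hceil : (⌈x⌉₊ : ℝ) < 2 ^ ⌈x⌉₊ := by exact_mod_cast Nat.lt_two_pow_self
  rw [pow_succ] at hpow
  linarith [Nat.le_ceil x]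

lemma abs_le_of_pow_six_le {F m D : ℝ} {N : ℕ} (hm : 0 ≤ m) (hD : D ≤ 2 ^ (N + 2))
    (hD0 : 0 ≤ D) (hF : F ^ 6 ≤ 10 ^ 17 * m ^ 4 * D ^ 4) :
    |F| ≤ 3000 * m ^ ((2 : ℝ) / 3) * (2 : ℝ) ^ (2 * (N : ℝ) / 3) := by
  have hm6 : (m ^ ((2 : ℝ) / 3)) ^ 6 = m ^ 4 := by
    rw [← rpow_natCast, ← rpow_mul hm]
    norm_num
  have h26 : ((2 : ℝ) ^ (2 * (N : ℝ) / 3)) ^ 6 = 2 ^ (4 * N) := by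
    rw [← rpow_natCast, ← rpow_mul (by norm_num), ← rpow_natCast]
    congr 1
    push_cast
    ring
  refine le_of_pow_le_pow_left₀ (n := 6) (by norm_num) (by positivity) ?_
  have hD4 : D ^ 4 ≤ 256 * 2 ^ (4 * N) := by
    calc D ^ 4 ≤ (2 ^ (N + 2)) ^ 4 := pow_le_pow_left₀ hD0 hD 4
      _ = 256 * 2 ^ (4 * N) := by ring
  rw [mul_pow, mul_pow, hm6, h26, (by norm_num : Even 6).pow_abs]
  calc F ^ 6 ≤ 10 ^ 17 * m ^ 4 * (256 * 2 ^ (4 * N)) := hF.trans (by gcongr)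
    _ ≤ 3000 ^ 6 * m ^ 4 * 2 ^ (4 * N) := by
        nlinarith [pow_nonneg hm 4, pow_pos (two_pos (α := ℝ)) (4 * N)]

/-- Bound on the Keller–Segel nonlinearity contribution: if
`2^{N-1} ≤ ‖ρ(·,t) - ρ_M‖²_{L²} ≤ 2^{N+2}` on `(s,r)`, then
`|∫_s^r ∫_Ω ρ ∂_{x₂}(−Δ_N)⁻¹(ρ - ρ_M) dx dt| ≤ C ρ_M^{2/3} 2^{2N/3}(r-s)`. -/
theorem keller_segel_nonlinearity_bound :
    ∃ N₀ : ℝ → ℕ, ∃ C : ℝ, 0 < C ∧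
      ∀ (g T : ℝ) (ρ cc ψ : ℝ → ℝ × ℝ → ℝ),
        IsRegSol g (Ico 0 T) ρ cc ψ → NonnegSol (Ico 0 T) ρ →
        ∀ N : ℕ, N₀ (meanQ (ρ 0)) ≤ N →
        ∀ s r : ℝ, 0 ≤ s → s < r → r < T →
          (∀ t ∈ Ioo s r,
            (2 : ℝ) ^ N / 2 ≤ nL2sq (devF ρ t) ∧ nL2sq (devF ρ t) ≤ 2 ^ (N + 2)) →
          |∫ t in s..r, ∫ p in Qdom, ρ t p * pd2 (cc t) p| ≤
            C * (meanQ (ρ 0)) ^ ((2 : ℝ) / 3) * (2 : ℝ) ^ (2 * (N : ℝ) / 3) * (r - s) := by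
  refine ⟨fun m => ⌈m ^ 2⌉₊ + 1, 3000, by norm_num, ?_⟩
  intro g T ρ cc ψ hsol hnn N hN s r hs hsr hrT hbnd
  have hpointwise : ∀ t ∈ Ioo s r, |∫ p in Qdom, ρ t p * pd2 (cc t) p| ≤
      3000 * meanQ (ρ 0) ^ ((2 : ℝ) / 3) * (2 : ℝ) ^ (2 * (N : ℝ) / 3) := by
    intro t ht
    have htI : t ∈ Ico 0 T ∩ Ioi 0 :=
      ⟨⟨hs.trans ht.1.le, ht.2.trans hrT⟩, hs.trans_lt ht.1⟩
    have hf0 : ∀ p ∈ Qdom, 0 ≤ ρ t p := fun p hp => hnn t htI.1 p (Qdom_subset_Strip hp)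
    obtain ⟨hlow, hup⟩ := hbnd t ht
    have hm : meanQ (ρ t) ^ 2 ≤ nL2sq (devF ρ t) := by
      have hmD := lt_two_pow_div_two_of_ceil_lt (hsol.meanQ_eq htI.1 ▸ hN)
      linarith
    rw [← hsol.meanQ_eq htI.1]
    exact abs_le_of_pow_six_le (meanQ_nonneg hf0) hup (nL2sq_nonneg _)
      (integral_mul_pd2_pow_six_le (hsol.smooth_space t htI).continuous hf0 (hsol.chem t htI) hm)
  exact abs_intervalIntegral_le_of_forall_Ioo hsr.le hpointwise
end
end
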